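/- arXiv:0710.5944 — 4 statements merged into one kernel-verified Lean document; each statement's English description precedes it below -/
import Mathlib

section
/- Let K be a compact Hausdorff space and (f_n) a uniformly bounded sequence of continuous real-valued functions on K which has no pointwise convergent subsequence. Then the family of all pointwise cluster points of (f_n) on K has cardinality at least 2^{𝔠}, where 𝔠 = 2^{ℵ₀}. -/
/-!
By Rosenthal's dichotomy there are a subsequence `f ∘ n` and reals `r < s` that are Boolean
independent: for every `S ⊆ ℕ` some point `x_S` has `f (n k) x_S ≤ r` for `k ∈ S` and
`s ≤ f (n k) x_S` for `k ∉ S`. The limits of `f ∘ n` along the `2 ^ 𝔠` free ultrafilters on `ℕ`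
(Pospíšil) are then cluster points of `f`, and two ultrafilters that disagree on `S` have limits
separated at `x_S`.

The dichotomy comes from Galvin's lemma, applied to the finite sets of indices along which no
point alternates between `{f i ≤ r}` and `{s ≤ f i}`: some infinite set of indices either
contains no such finite set, which by compactness gives Boolean independence, or carries no point
oscillating infinitely often across `[r, s]`. If the latter held for every rational pair, a
diagonal subsequence would converge pointwise.
-/

open Filter Topology Set

def above (s : Finset ℕ) : Set ℕ := {a | ∀ b ∈ s, b < a}

lemma finite_compl_above (s : Finset ℕ) : (above s)ᶜ.Finite :=
  (s.finite_toSet.biUnion fun b _ => finite_Iic b).subset fun a ha => by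
    simp only [above, mem_compl_iff, mem_ofPred_eq, not_forall, not_lt] at ha
    obtain ⟨b, hb, hab⟩ := ha
    exact mem_biUnion hb hab

lemma Set.Infinite.inter_above {N : Set ℕ} (hN : N.Infinite) (s : Finset ℕ) :
    (N ∩ above s).Infinite := by
  simpa [sdiff_compl] using hN.sdiff (finite_compl_above s)

lemma Set.Infinite.inter_Ioi {N : Set ℕ} (hN : N.Infinite) (a : ℕ) : (N ∩ Ioi a).Infinite := by
  simpa [sdiff_eq] using hN.sdiff (finite_Iic a)

@[simp] lemma above_empty : above ∅ = univ := by simp [above]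

lemma above_eq_Ioi_max' {s : Finset ℕ} (hs : s.Nonempty) : above s = Ioi (s.max' hs) := by
  ext a; simp [above, Finset.max'_lt_iff]

lemma Set.Finite.of_inter_above {N : Set ℕ} {q : ℕ → Prop} (s : Finset ℕ)
    (h : {i ∈ N ∩ above s | q i}.Finite) : {i ∈ N | q i}.Finite :=
  (h.union (finite_compl_above s)).subset fun i hi => by
    by_cases has : i ∈ above s
    exacts [Or.inl ⟨⟨hi.1, has⟩, hi.2⟩, Or.inr has]

lemma exists_forall_mem_finset_of_dense (P : Finset ℕ → Set ℕ → Prop)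
    (hmono : ∀ s {N N'}, N' ⊆ N → P s N → P s N') {M : Set ℕ}
    (hdense : ∀ s, ∀ N ⊆ M, N.Infinite → ∃ N' ⊆ N, N'.Infinite ∧ P s N')
    (T : Finset (Finset ℕ)) (N : Set ℕ) (hNM : N ⊆ M) (hN : N.Infinite) :
    ∃ N' ⊆ N, N'.Infinite ∧ ∀ s ∈ T, P s N' := by
  induction T using Finset.induction_on with
  | empty => exact ⟨N, subset_rfl, hN, by simp⟩
  | insert s T _ ih =>
    obtain ⟨N₁, hN₁, hN₁i, hT⟩ := ih
    obtain ⟨N₂, hN₂, hN₂i, hs⟩ := hdense s N₁ (hN₁.trans hNM) hN₁i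
    refine ⟨N₂, hN₂.trans hN₁, hN₂i, ?_⟩
    simp only [Finset.mem_insert, forall_eq_or_imp]
    exact ⟨hs, fun t ht => hmono t hN₂ (hT t ht)⟩

theorem exists_forall_above_of_dense (P : Finset ℕ → Set ℕ → Prop)
    (hmono : ∀ s {N N'}, N' ⊆ N → P s N → P s N') {M : Set ℕ} (hM : M.Infinite)
    (hdense : ∀ s, ∀ N ⊆ M, N.Infinite → ∃ N' ⊆ N, N'.Infinite ∧ P s N') :
    ∃ N ⊆ M, N.Infinite ∧ ∀ s : Finset ℕ, ↑s ⊆ N → P s (N ∩ above s) := by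
  choose! R hRsub hRinf hRP using exists_forall_mem_finset_of_dense P hmono hdense
  -- `E (k + 1)` lies above `m k = sInf (E k)` and satisfies `P s` for all `s ⊆ {0, …, m k}`
  let E : ℕ → Set ℕ := fun k => Nat.rec (R {∅} M)
    (fun _ C => R (Finset.range (sInf C + 1)).powerset (C ∩ Ioi (sInf C))) k
  have hE : ∀ k, E k ⊆ M ∧ (E k).Infinite := by
    intro k
    induction k with
    | zero => exact ⟨hRsub _ _ subset_rfl hM, hRinf _ _ subset_rfl hM⟩
    | succ k ih =>
      have h := ih.2.inter_Ioi (sInf (E k))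
      exact ⟨(hRsub _ _ (inter_subset_left.trans ih.1) h).trans (inter_subset_left.trans ih.1),
        hRinf _ _ (inter_subset_left.trans ih.1) h⟩
  set m : ℕ → ℕ := fun k => sInf (E k)
  have hm : ∀ k, m k ∈ E k := fun k => Nat.sInf_mem (hE k).2.nonempty
  have hsucc : ∀ k, E (k + 1) ⊆ E k ∩ Ioi (m k) := fun k =>
    hRsub _ _ (inter_subset_left.trans (hE k).1) ((hE k).2.inter_Ioi _)
  have hP : ∀ k, ∀ s ∈ (Finset.range (m k + 1)).powerset, P s (E (k + 1)) := fun k =>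
    hRP _ _ (inter_subset_left.trans (hE k).1) ((hE k).2.inter_Ioi _)
  have hanti : Antitone E := antitone_nat_of_succ_le fun k => (hsucc k).trans inter_subset_left
  have hm_mono : StrictMono m := strictMono_nat_of_lt_succ fun k => (hsucc k (hm (k + 1))).2
  refine ⟨range m, ?_, infinite_range_of_injective hm_mono.injective, ?_⟩
  · rintro _ ⟨k, rfl⟩
    exact (hE k).1 (hm k)
  intro s hs
  rcases s.eq_empty_or_nonempty with rfl | hne
  · refine hmono ∅ ?_ (hRP {∅} M subset_rfl hM ∅ (Finset.mem_singleton_self _))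
    rintro _ ⟨⟨k, rfl⟩, -⟩
    exact hanti (Nat.zero_le k) (hm k)
  · obtain ⟨k, hk⟩ := hs (s.max'_mem hne)
    refine hmono s ?_ (hP k s (Finset.mem_powerset.mpr fun b hb => Finset.mem_range.mpr
      (Nat.lt_succ_of_le (hk ▸ s.le_max' b hb))))
    rintro _ ⟨⟨i, rfl⟩, hi⟩
    rw [above_eq_Ioi_max' hne, ← hk] at hi
    exact hanti (hm_mono.lt_iff_lt.mp hi) (hm i)

theorem exists_infinite_forall_of_dense {ι : Type*} [Encodable ι] (P : ι → Set ℕ → Prop)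
    (hmono : ∀ i {N N'}, N' ⊆ N → P i N → P i N')
    (habove : ∀ i N (s : Finset ℕ), P i (N ∩ above s) → P i N)
    (hdense : ∀ i N, N.Infinite → ∃ N' ⊆ N, N'.Infinite ∧ P i N') :
    ∃ N : Set ℕ, N.Infinite ∧ ∀ i, P i N := by
  -- the property `P i` is enforced above every finite set with `encode i` elements
  obtain ⟨N, -, hN, hP⟩ := exists_forall_above_of_dense
    (fun s N => ∀ i : ι, Encodable.encode i = s.card → P i N)
    (fun s N N' h hN i hi => hmono i h (hN i hi)) infinite_univ fun s N _ hNi => by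
      by_cases hs : ∃ i : ι, Encodable.encode i = s.card
      · obtain ⟨i, hi⟩ := hs
        obtain ⟨N', hN', hN'i, hP⟩ := hdense i N hNi
        refine ⟨N', hN', hN'i, fun j hj => ?_⟩
        rwa [Encodable.encode_injective (hj.trans hi.symm)]
      · exact ⟨N, subset_rfl, hNi, fun i hi => absurd ⟨i, hi⟩ hs⟩
  refine ⟨N, hN, fun i => ?_⟩
  obtain ⟨s, hsN, hs⟩ := hN.exists_subset_card_eq (Encodable.encode i)
  exact habove i N s (hP s hsN i hs.symm)

def HasInitialSegmentIn (F : Set (Finset ℕ)) (L : Set ℕ) : Prop :=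
  ∃ s ∈ F, ∃ a, (s : Set ℕ) = L ∩ Iio a

namespace Galvin

variable (F : Set (Finset ℕ))

def Accepts (M : Set ℕ) (s : Finset ℕ) : Prop :=
  ∀ L ⊆ M ∩ above s, L.Infinite → HasInitialSegmentIn F (↑s ∪ L)

def Rejects (M : Set ℕ) (s : Finset ℕ) : Prop :=
  ∀ N ⊆ M, N.Infinite → ¬Accepts F N s

variable {F}

lemma Accepts.mono {M N : Set ℕ} {s : Finset ℕ} (h : N ⊆ M) (hM : Accepts F M s) :
    Accepts F N s :=
  fun L hL => hM L (hL.trans (inter_subset_inter_left _ h))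

lemma Rejects.mono {M N : Set ℕ} {s : Finset ℕ} (h : N ⊆ M) (hM : Rejects F M s) :
    Rejects F N s :=
  fun L hL => hM L (hL.trans h)

lemma accepts_of_mem {s : Finset ℕ} (hs : s ∈ F) (M : Set ℕ) : Accepts F M s := by
  intro L hL hLi
  refine ⟨s, hs, sInf L, ?_⟩
  ext a
  constructor
  · intro ha
    exact ⟨Or.inl ha, (hL (Nat.sInf_mem hLi.nonempty)).2 a ha⟩
  · rintro ⟨ha | ha, hlt⟩
    · exact ha
    · exact absurd (Nat.sInf_le ha) (not_le.mpr hlt)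

lemma exists_accepts_or_rejects (s : Finset ℕ) {M : Set ℕ} (hM : M.Infinite) :
    ∃ N ⊆ M, N.Infinite ∧ (Accepts F N s ∨ Rejects F N s) := by
  by_cases h : Rejects F M s
  · exact ⟨M, subset_rfl, hM, Or.inr h⟩
  · simp only [Rejects, not_forall, not_not] at h
    obtain ⟨N, hNM, hNi, hN⟩ := h
    exact ⟨N, hNM, hNi, Or.inl hN⟩

lemma rejects_of_inter_above {M : Set ℕ} {s : Finset ℕ} (h : Rejects F (M ∩ above s) s) :
    Rejects F M s := fun N hNM hNi hN =>
  h (N ∩ above s) (inter_subset_inter_left _ hNM) (hNi.inter_above s) (hN.mono inter_subset_left)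

lemma finite_accepts_insert {M : Set ℕ} {s : Finset ℕ} (h : Rejects F M s) :
    {a ∈ M ∩ above s | Accepts F M (insert a s)}.Finite := by
  by_contra hinf
  refine h _ (fun a ha => ha.1.1) hinf fun L hL hLi => ?_
  set a := sInf L
  have haL : a ∈ L := Nat.sInf_mem hLi.nonempty
  have hL' : L \ {a} ⊆ M ∩ above (insert a s) := by
    refine fun b hb => ⟨(hL hb.1).1.1.1, ?_⟩
    simp only [above, Finset.mem_insert, forall_eq_or_imp, mem_ofPred_eq]
    exact ⟨lt_of_le_of_ne (Nat.sInf_le hb.1) (Ne.symm hb.2), (hL hb.1).2⟩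
  have := (hL haL).1.2 _ hL' (hLi.sdiff (finite_singleton a))
  rwa [Finset.coe_insert, insert_union, ← union_insert, insert_sdiff_singleton,
    insert_eq_of_mem haL] at this

end Galvin

open Galvin in
/-- **Galvin's lemma** -/
theorem exists_infinite_subset_forall_notMem_or_forall_hasInitialSegmentIn
    (F : Set (Finset ℕ)) {M : Set ℕ} (hM : M.Infinite) :
    ∃ N ⊆ M, N.Infinite ∧ ((∀ s : Finset ℕ, ↑s ⊆ N → s ∉ F) ∨
      ∀ L ⊆ N, L.Infinite → HasInitialSegmentIn F L) := by
  obtain ⟨M₁, hM₁M, hM₁, hdec⟩ := exists_forall_above_of_dense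
    (fun s N => Accepts F N s ∨ Rejects F N s)
    (fun s N N' h => Or.imp (Accepts.mono h) (Rejects.mono h)) hM
    fun s N _ hN => exists_accepts_or_rejects s hN
  replace hdec : ∀ s : Finset ℕ, ↑s ⊆ M₁ → Accepts F M₁ s ∨ Rejects F M₁ s := fun s hs =>
    (hdec s hs).imp (fun h L hL => h L (by rwa [inter_assoc, inter_self])) rejects_of_inter_above
  by_cases h₀ : Accepts F M₁ ∅
  · exact ⟨M₁, hM₁M, hM₁, Or.inr fun L hL hLi => by simpa using h₀ L (by simpa using hL) hLi⟩
  have h₀ : Rejects F M₁ ∅ := (hdec ∅ (by simp)).resolve_left h₀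
  have hdense : ∀ s, ∀ N ⊆ M₁, N.Infinite → ∃ N' ⊆ N, N'.Infinite ∧
      (Rejects F M₁ s → ∀ a ∈ N' ∩ above s, ¬Accepts F M₁ (insert a s)) := by
    intro s N hN hNi
    by_cases hs : Rejects F M₁ s
    · exact ⟨N \ {a ∈ M₁ ∩ above s | Accepts F M₁ (insert a s)}, sdiff_subset,
        hNi.sdiff (finite_accepts_insert hs), fun _ a ha hacc => ha.1.2 ⟨⟨hN ha.1.1, ha.2⟩, hacc⟩⟩
    · exact ⟨N, subset_rfl, hNi, fun h => absurd h hs⟩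
  obtain ⟨M₂, hM₂M₁, hM₂, hext⟩ := exists_forall_above_of_dense _
    (fun s N N' h hN hs a ha => hN hs a ⟨h ha.1, ha.2⟩) hM₁ hdense
  have hrej : ∀ s : Finset ℕ, ↑s ⊆ M₂ → Rejects F M₁ s := by
    intro s
    induction s using Finset.induction_on_max with
    | empty => exact fun _ => h₀
    | insert a s has ih =>
      intro hs
      have hs' := hs
      rw [Finset.coe_insert, insert_subset_iff] at hs'
      exact (hdec _ (hs.trans hM₂M₁)).resolve_left
        (hext s hs'.2 (ih hs'.2) a ⟨⟨hs'.1, has⟩, has⟩)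
  exact ⟨M₂, hM₂M₁.trans hM₁M, hM₂, Or.inl fun s hs hsF =>
    hrej s hs M₁ subset_rfl hM₁ (accepts_of_mem hsF M₁)⟩

lemma card_filter_image_range_lt {σ : ℕ → ℕ} (hσ : StrictMono σ) {j k : ℕ} (hj : j < k) :
    (((Finset.range k).image σ).filter (· < σ j)).card = j := by
  have : ((Finset.range k).image σ).filter (· < σ j) = (Finset.range j).image σ := by
    ext a
    simp only [Finset.mem_filter, Finset.mem_image, Finset.mem_range]
    constructor
    · rintro ⟨⟨i, -, rfl⟩, hi⟩
      exact ⟨i, hσ.lt_iff_lt.mp hi, rfl⟩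
    · rintro ⟨i, hi, rfl⟩
      exact ⟨⟨i, hi.trans hj, rfl⟩, hσ hi⟩
  rw [this, Finset.card_image_of_injective _ hσ.injective, Finset.card_range]

lemma range_inter_Iio_eq_image_Iio {σ : ℕ → ℕ} (hσ : StrictMono σ) (a : ℕ) :
    ∃ k, range σ ∩ Iio a = σ '' Iio k := by
  have hex : ∃ k, a ≤ σ k := ⟨a, hσ.le_apply⟩
  refine ⟨Nat.find hex, ?_⟩
  ext b
  simp only [mem_inter_iff, mem_range, mem_Iio, mem_image]
  constructor
  · rintro ⟨⟨j, rfl⟩, hj⟩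
    exact ⟨j, lt_of_not_ge fun hle => (Nat.find_spec hex).trans (hσ.monotone hle) |>.not_gt hj,
      rfl⟩
  · rintro ⟨j, hj, rfl⟩
    exact ⟨⟨j, rfl⟩, not_le.mp (Nat.find_min hex hj)⟩

lemma strictMono_blockIndex (S : Set ℕ) [DecidablePred (· ∈ S)] :
    StrictMono fun j => 3 * (j / 2) + j % 2 + if j / 2 ∈ S then 1 else 0 := by
  refine strictMono_nat_of_lt_succ fun j => ?_
  rcases Nat.even_or_odd' j with ⟨k, rfl | rfl⟩
  · have h1 : (2 * k + 1) / 2 = k := by omega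
    simp only [h1, Nat.mul_div_cancel_left k two_pos]
    split_ifs <;> omega
  · have h1 : (2 * k + 1) / 2 = k := by omega
    have h2 : (2 * k + 1 + 1) / 2 = k + 1 := by omega
    simp only [h1, h2]
    split_ifs <;> omega

lemma not_frequently_nth_of_finite {N : Set ℕ} (hN : N.Infinite) {q : ℕ → Prop}
    (h : {i ∈ N | q i}.Finite) : ¬∃ᶠ j in atTop, q (Nat.nth (· ∈ N) j) := by
  rw [Nat.frequently_atTop_iff_infinite]
  exact fun hinf => hinf <| (h.preimage (Nat.nth_strictMono hN).injective.injOn).subset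
    fun j hj => ⟨Nat.nth_mem_of_infinite hN j, hj⟩

section Alternation

variable {X : Type*} (A B : ℕ → Set X)

/-- The points that, along the increasing enumeration of `s`, lie alternately in the sets
`A i` and `B i`, starting with `A`. -/
def altPattern (s : Finset ℕ) : Set X :=
  {x | ∀ i ∈ s, x ∈ if Even (s.filter (· < i)).card then A i else B i}

def BooleanIndependent : Prop :=
  ∀ S : Set ℕ, ∃ x, (∀ k ∈ S, x ∈ A k) ∧ ∀ k ∉ S, x ∈ B k

variable {A B}

lemma mem_altPattern_image_range {σ : ℕ → ℕ} (hσ : StrictMono σ) {k : ℕ} {x : X} :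
    x ∈ altPattern A B ((Finset.range k).image σ) ↔
      ∀ j < k, x ∈ if Even j then A (σ j) else B (σ j) := by
  simp only [altPattern, mem_ofPred_eq, Finset.forall_mem_image, Finset.mem_range]
  exact forall₂_congr fun j hj => by rw [card_filter_image_range_lt hσ hj]

lemma finite_or_finite_of_forall_hasInitialSegmentIn {N : Set ℕ}
    (h : ∀ L ⊆ N, L.Infinite → HasInitialSegmentIn {s | altPattern A B s = ∅} L) (x : X) :
    {i ∈ N | x ∈ A i}.Finite ∨ {i ∈ N | x ∈ B i}.Finite := by
  by_contra! hAB
  obtain ⟨σ, hσ, hσN⟩ : ∃ σ : ℕ → ℕ, StrictMono σ ∧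
      ∀ j, σ j ∈ N ∧ x ∈ if Even j then A (σ j) else B (σ j) := by
    refine extraction_forall_of_frequently
      (P := fun j i => i ∈ N ∧ x ∈ if Even j then A i else B i) fun j => ?_
    split_ifs
    · exact Nat.frequently_atTop_iff_infinite.mpr hAB.1
    · exact Nat.frequently_atTop_iff_infinite.mpr hAB.2
  obtain ⟨s, hs, a, hsa⟩ := h (range σ) (range_subset_iff.mpr fun j => (hσN j).1)
    (infinite_range_of_injective hσ.injective)
  obtain ⟨k, hk⟩ := range_inter_Iio_eq_image_Iio hσ a
  have : s = (Finset.range k).image σ := by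
    apply Finset.coe_injective
    rw [hsa, hk, Finset.coe_image, Finset.coe_range]
  have hx : x ∈ altPattern A B s := this ▸ (mem_altPattern_image_range hσ).mpr fun j _ => (hσN j).2
  exact (Set.eq_empty_iff_forall_notMem.mp hs) x hx

end Alternation

section Dichotomy

variable {X : Type*} [TopologicalSpace X] [CompactSpace X] {A B : ℕ → Set X}

lemma exists_forall_mem_alternating (hA : ∀ i, IsClosed (A i)) (hB : ∀ i, IsClosed (B i))
    {N : Set ℕ} (h : ∀ s : Finset ℕ, ↑s ⊆ N → (altPattern A B s).Nonempty)
    {σ : ℕ → ℕ} (hσ : StrictMono σ) (hσN : ∀ j, σ j ∈ N) :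
    ∃ x, ∀ j, x ∈ if Even j then A (σ j) else B (σ j) := by
  have hclosed : ∀ j, IsClosed (if Even j then A (σ j) else B (σ j)) := fun j => by
    split_ifs
    exacts [hA _, hB _]
  simpa using CompactSpace.iInter_nonempty hclosed fun u => by
    obtain ⟨x, hx⟩ := h ((Finset.range (u.sup id + 1)).image σ) fun a ha => by
      obtain ⟨j, -, rfl⟩ := Finset.mem_image.mp ha
      exact hσN j
    rw [mem_altPattern_image_range hσ] at hx
    exact ⟨x, mem_iInter₂.mpr fun j hj => hx j (Nat.lt_succ_of_le (u.le_sup (f := id) hj))⟩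

lemma exists_boolIndependent_of_forall_altPattern_nonempty (hA : ∀ i, IsClosed (A i))
    (hB : ∀ i, IsClosed (B i)) {N : Set ℕ} (hN : N.Infinite)
    (h : ∀ s : Finset ℕ, ↑s ⊆ N → (altPattern A B s).Nonempty) :
    ∃ n : ℕ → ℕ, StrictMono n ∧ BooleanIndependent (A ∘ n) (B ∘ n) := by
  classical
  set e := Nat.nth (· ∈ N)
  have he : StrictMono e := Nat.nth_strictMono hN
  -- The `k`-th term `e (3k+1)` is placed at an even or an odd position of an increasing
  -- sequence in `N` by padding it with `e (3k+2)` after it or `e (3k)` before it.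
  refine ⟨fun k => e (3 * k + 1), he.comp fun a b hab => by omega, fun S => ?_⟩
  obtain ⟨x, hx⟩ := exists_forall_mem_alternating hA hB h (he.comp (strictMono_blockIndex S))
    fun j => Nat.nth_mem_of_infinite hN _
  refine ⟨x, fun k hk => ?_, fun k hk => ?_⟩
  · simpa [hk] using hx (2 * k)
  · have hk2 : (2 * k + 1) / 2 = k := by omega
    simpa [hk, hk2] using hx (2 * k + 1)

/-- **Rosenthal's dichotomy** -/
theorem exists_boolIndependent_or_exists_finite_or_finite (hA : ∀ i, IsClosed (A i))
    (hB : ∀ i, IsClosed (B i)) {M : Set ℕ} (hM : M.Infinite) :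
    (∃ n : ℕ → ℕ, StrictMono n ∧ BooleanIndependent (A ∘ n) (B ∘ n)) ∨
      ∃ N ⊆ M, N.Infinite ∧ ∀ x, {i ∈ N | x ∈ A i}.Finite ∨ {i ∈ N | x ∈ B i}.Finite := by
  obtain ⟨N, hNM, hN, h | h⟩ :=
    exists_infinite_subset_forall_notMem_or_forall_hasInitialSegmentIn
      {s | altPattern A B s = ∅} hM
  · exact Or.inl <| exists_boolIndependent_of_forall_altPattern_nonempty hA hB hN
      fun s hs => nonempty_iff_ne_empty.mpr (h s hs)
  · exact Or.inr ⟨N, hNM, hN, finite_or_finite_of_forall_hasInitialSegmentIn h⟩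

end Dichotomy

theorem exists_boolIndependent_of_not_exists_tendsto {K : Type*} [TopologicalSpace K]
    [CompactSpace K] (f : ℕ → K → ℝ) (hcont : ∀ n, Continuous (f n)) {C : ℝ}
    (hC : ∀ n k, |f n k| ≤ C)
    (hdiv : ¬∃ φ : ℕ → ℕ, StrictMono φ ∧
      ∀ k : K, ∃ L : ℝ, Tendsto (fun j => f (φ j) k) atTop (𝓝 L)) :
    ∃ r s : ℝ, r < s ∧ ∃ n : ℕ → ℕ, StrictMono n ∧
      BooleanIndependent (fun k => {x | f (n k) x ≤ r}) (fun k => {x | s ≤ f (n k) x}) := by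
  by_contra hind
  let P : ℚ × ℚ → Set ℕ → Prop := fun p N =>
    p.1 < p.2 → ∀ x, {i ∈ N | f i x ≤ p.1}.Finite ∨ {i ∈ N | p.2 ≤ f i x}.Finite
  have hdense : ∀ p N, N.Infinite → ∃ N' ⊆ N, N'.Infinite ∧ P p N' := by
    rintro ⟨r, s⟩ N hN
    by_cases hrs : r < s
    · rcases exists_boolIndependent_or_exists_finite_or_finite
        (A := fun i => {x | f i x ≤ r}) (B := fun i => {x | s ≤ f i x})
        (fun i => isClosed_le (hcont i) continuous_const)
        (fun i => isClosed_le continuous_const (hcont i)) hN with hn | ⟨N', hN', hN'i, h⟩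
      · exact absurd ⟨r, s, by exact_mod_cast hrs, hn⟩ hind
      · exact ⟨N', hN', hN'i, fun _ => h⟩
    · exact ⟨N, subset_rfl, hN, fun h => absurd h hrs⟩
  obtain ⟨N, hN, hNP⟩ := exists_infinite_forall_of_dense P
    (fun p N N' h hN hp x => (hN hp x).imp (·.subset fun i hi => ⟨h hi.1, hi.2⟩)
      (·.subset fun i hi => ⟨h hi.1, hi.2⟩))
    (fun p N s hN hp x => (hN hp x).imp (·.of_inter_above s) (·.of_inter_above s)) hdense
  refine hdiv ⟨Nat.nth (· ∈ N), Nat.nth_strictMono hN, fun x => ?_⟩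
  refine tendsto_of_no_upcrossings Rat.denseRange_cast ?_
    (isBoundedUnder_of ⟨C, fun j => (abs_le.mp (hC _ x)).2⟩)
    (isBoundedUnder_of ⟨-C, fun j => (abs_le.mp (hC _ x)).1⟩)
  rintro _ ⟨r, rfl⟩ _ ⟨s, rfl⟩ hrs ⟨hr, hs⟩
  rcases hNP (r, s) (by exact_mod_cast hrs) x with h | h
  · exact not_frequently_nth_of_finite hN h (hr.mono fun j hj => hj.le)
  · exact not_frequently_nth_of_finite hN h (hs.mono fun j hj => hj.le)

theorem exists_independent_family :
    ∃ S : Set ℕ → Set ℕ, ∀ (A : Set (Set ℕ)) (t : Finset (Set ℕ)),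
      {k | ∀ B ∈ t, k ∈ S B ↔ B ∈ A}.Infinite := by
  classical
  -- `(n, Φ)` lies in a Boolean combination once `[0, n)` separates the sets involved and `Φ`
  -- lists the traces on `[0, n)` of those taken positively
  let trace : Set ℕ → ℕ → Finset ℕ := fun B n => (Finset.range n).filter (· ∈ B)
  let T : Set ℕ → Set (ℕ × Finset (Finset ℕ)) := fun B => {j | trace B j.1 ∈ j.2}
  let e : ℕ ≃ ℕ × Finset (Finset ℕ) := (Denumerable.eqv _).symm
  refine ⟨fun B => e ⁻¹' T B, fun A t => ?_⟩
  have hsep : ∀ᶠ n in atTop, InjOn (trace · n) t := by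
    have : ∀ B ∈ t, ∀ B' ∈ t, ∀ᶠ n in atTop, trace B n = trace B' n → B = B' := by
      intro B _ B' _
      by_cases hBB : B = B'
      · exact Eventually.of_forall fun _ _ => hBB
      obtain ⟨m, hm⟩ : ∃ m, ¬(m ∈ B ↔ m ∈ B') := by
        by_contra! h
        exact hBB (Set.ext h)
      filter_upwards [eventually_gt_atTop m] with n hn heq
      exact absurd (by simpa [trace, hn] using Finset.ext_iff.mp heq m) hm
    filter_upwards [(eventually_all_finset t).mpr fun B hB =>
      (eventually_all_finset t).mpr (this B hB)] with n hn B hB B' hB' using hn B hB B' hB'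
  obtain ⟨n₀, hn₀⟩ := eventually_atTop.mp hsep
  let j : ℕ → ℕ × Finset (Finset ℕ) := fun n =>
    (n₀ + n, (t.filter (· ∈ A)).image (trace · (n₀ + n)))
  have hj : ∀ n, j n ∈ {i | ∀ B ∈ t, i ∈ T B ↔ B ∈ A} := by
    intro n B hB
    simp only [T, j, mem_ofPred_eq, Finset.mem_image, Finset.mem_filter]
    constructor
    · rintro ⟨B', ⟨hB't, hB'A⟩, heq⟩
      rwa [← hn₀ (n₀ + n) (Nat.le_add_right _ _) hB't hB heq]
    · exact fun hBA => ⟨B, ⟨hB, hBA⟩, rfl⟩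
  exact (infinite_of_injective_forall_mem (fun a b h => by simpa [j] using congrArg Prod.fst h)
    hj).preimage (e.surjective.range_eq ▸ subset_univ _)

open Cardinal in
/-- **Pospíšil's theorem** -/
theorem two_pow_continuum_le_card_ultrafilter_le_cofinite :
    2 ^ 𝔠 ≤ Cardinal.mk {U : Ultrafilter ℕ // ↑U ≤ (cofinite : Filter ℕ)} := by
  obtain ⟨S, hS⟩ := exists_independent_family
  let F : Set (Set ℕ) → Filter ℕ := fun A =>
    ⨅ t : Finset (Set ℕ), cofinite ⊓ 𝓟 {k | ∀ B ∈ t, k ∈ S B ↔ B ∈ A}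
  have hF : ∀ A, (F A).NeBot := fun A =>
    iInf_neBot_of_directed' (fun t t' => ⟨t ∪ t',
      inf_le_inf_left _ (principal_mono.mpr fun k hk B hB => hk B (Finset.mem_union_left _ hB)),
      inf_le_inf_left _ (principal_mono.mpr fun k hk B hB => hk B (Finset.mem_union_right _ hB))⟩)
      fun t => (hS A t).cofinite_inf_principal_neBot
  let U : Set (Set ℕ) → {U : Ultrafilter ℕ // ↑U ≤ (cofinite : Filter ℕ)} := fun A =>
    ⟨@Ultrafilter.of _ (F A) (hF A), (Ultrafilter.of_le _).trans (iInf_le_of_le ∅ inf_le_left)⟩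
  have hU : ∀ A B, {k | k ∈ S B ↔ B ∈ A} ∈ (U A).1 := fun A B =>
    Ultrafilter.of_le _ (mem_iInf_of_mem {B} (mem_inf_of_right (by simp)))
  have hinj : Function.Injective U := by
    intro A A' h
    ext B
    have hA' := hU A' B
    rw [← h] at hA'
    obtain ⟨k, hk, hk'⟩ := Ultrafilter.nonempty_of_mem (inter_mem (hU A B) hA')
    exact hk.symm.trans hk'
  calc (2 : Cardinal) ^ 𝔠 = Cardinal.mk (Set (Set ℕ)) := by
        rw [Cardinal.mk_set, Cardinal.mk_set, Cardinal.mk_nat, Cardinal.two_power_aleph0]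
    _ ≤ _ := Cardinal.mk_le_of_injective hinj

lemma exists_tendsto_ultrafilter {K ι : Type*} (u : ι → K → ℝ) {C : ℝ} (hC : ∀ i k, |u i k| ≤ C)
    (U : Ultrafilter ι) : ∃ g, Tendsto u U (𝓝 g) := by
  obtain ⟨g, -, hg⟩ := (isCompact_univ_pi fun _ : K => isCompact_Icc (a := -C) (b := C))
    |>.ultrafilter_le_nhds' (U.map u)
      (Ultrafilter.mem_map.mpr (univ_mem' fun i k _ => abs_le.mp (hC i k)))
  exact ⟨g, hg⟩

open Cardinal in
theorem two_pow_continuum_le_card_mapClusterPt_of_boolIndependent {K : Type*} (f : ℕ → K → ℝ)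
    {C : ℝ} (hC : ∀ n k, |f n k| ≤ C) {r s : ℝ} (hrs : r < s) {n : ℕ → ℕ} (hn : StrictMono n)
    (hind : BooleanIndependent (fun k => {x | f (n k) x ≤ r}) (fun k => {x | s ≤ f (n k) x})) :
    2 ^ 𝔠 ≤ Cardinal.mk {g : K → ℝ | MapClusterPt g atTop f} := by
  choose x hxS hxSc using hind
  choose g hg using exists_tendsto_ultrafilter (fun k => f (n k)) fun k => hC (n k)
  have hcl : ∀ U : {U : Ultrafilter ℕ // ↑U ≤ (cofinite : Filter ℕ)},
      MapClusterPt (g U) atTop f := fun U =>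
    (hg U).mapClusterPt.of_comp (hn.tendsto_atTop.mono_left (Nat.cofinite_eq_atTop ▸ U.2))
  have hsep : ∀ (U V : Ultrafilter ℕ) (S : Set ℕ), S ∈ U → Sᶜ ∈ V → g U ≠ g V := by
    intro U V S hSU hSV hUV
    have hU := le_of_tendsto (tendsto_pi_nhds.mp (hg U) (x S)) (mem_of_superset hSU (hxS S))
    have hV := ge_of_tendsto (tendsto_pi_nhds.mp (hg V) (x S)) (mem_of_superset hSV (hxSc S))
    exact (hU.trans_lt hrs).not_ge (hUV ▸ hV)
  have hinj : Function.Injective fun U : {U : Ultrafilter ℕ // ↑U ≤ (cofinite : Filter ℕ)} =>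
      (⟨g U, hcl U⟩ : {g : K → ℝ | MapClusterPt g atTop f}) :=
    fun U V hUV => Subtype.ext <| Ultrafilter.eq_of_le fun S hS => by
      by_contra hSU
      exact hsep V.1 U.1 S hS (Ultrafilter.compl_mem_iff_notMem.mpr hSU)
        (congrArg Subtype.val hUV).symm
  simpa only [lift_two_power, lift_continuum, lift_ofNat, lift_uzero] using
    (lift_le.mpr two_pow_continuum_le_card_ultrafilter_le_cofinite).trans
      (lift_mk_le_lift_mk_of_injective hinj)

theorem card_clusterPoints_ge_two_pow_continuum_general
    (K : Type*) [TopologicalSpace K] [CompactSpace K]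
    (f : ℕ → K → ℝ) (hcont : ∀ n, Continuous (f n))
    (hbdd : ∃ C : ℝ, ∀ n k, |f n k| ≤ C)
    (hdiv : ¬ ∃ φ : ℕ → ℕ, StrictMono φ ∧
      ∀ k : K, ∃ L : ℝ, Tendsto (fun j => f (φ j) k) atTop (𝓝 L)) :
    2 ^ Cardinal.continuum ≤ Cardinal.mk {g : K → ℝ | MapClusterPt g atTop f} := by
  obtain ⟨C, hC⟩ := hbdd
  obtain ⟨r, s, hrs, n, hn, hind⟩ := exists_boolIndependent_of_not_exists_tendsto f hcont hC hdiv
  exact two_pow_continuum_le_card_mapClusterPt_of_boolIndependent f hC hrs hn hind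

/-- If `K` is a compact Hausdorff space and `(f_n)` is a uniformly bounded
sequence of continuous real-valued functions on `K` with no pointwise convergent
subsequence, then the family of pointwise cluster points of `(f_n)` has cardinality at
least `2 ^ 𝔠`. -/
theorem card_clusterPoints_ge_two_pow_continuum
    (K : Type*) [TopologicalSpace K] [CompactSpace K] [T2Space K]
    (f : ℕ → K → ℝ) (hcont : ∀ n, Continuous (f n))
    (hbdd : ∃ C : ℝ, ∀ n k, |f n k| ≤ C)
    (hdiv : ¬ ∃ φ : ℕ → ℕ, StrictMono φ ∧
      ∀ k : K, ∃ L : ℝ, Tendsto (fun j => f (φ j) k) atTop (𝓝 L)) :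
    2 ^ Cardinal.continuum ≤ Cardinal.mk {g : K → ℝ | MapClusterPt g atTop f} :=
  card_clusterPoints_ge_two_pow_continuum_general K f hcont hbdd hdiv
end

section
/- Let W be a weakly precompact subset of a real Banach space X. Then the norm-closed convex hull of W is weakly precompact. -/
/-
Suppose a sequence in `convexHull ℝ W` has no weak-Cauchy subsequence. Rosenthal's combinatorial
dichotomy gives a subsequence `(y t)` and `r < s` such that, for all disjoint finite `F` and `G`,
some functional of norm at most one is `< r` on the `y t` with `t ∈ F` and `> s` on those with
`t ∈ G`. Write `y t` as convex combinations of points `D k ∈ W` and record a functional by its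
profile `(f (D k))ₖ`; by Banach–Alaoglu these profiles form a compact convex set, and strict
convexity lets one choose, measurably in `σ : ℕ → Bool`, a profile `g σ` obeying the constraint
"`≤ r` at `t` if `σ t = false`, `≥ s` if `σ t = true`" for every `t`. For the coin-tossing
measure, the resulting functions `H t σ` (the combination of `g σ` representing `y t`) are
`(s - r) / 4` apart in `L¹`. On the other hand, weak precompactness of `W` gives every sequence of
coordinate functions `σ ↦ g σ k` a pointwise convergent subsequence, so these functions form a
totally bounded subset of `L¹`, and so does its convex hull, which contains every `H t`.
Passing to the norm closure is harmless, as norm-small perturbations keep sequences weak-Cauchy.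
-/

open Filter Topology

noncomputable section

/-- A subset `W` of a normed space is weakly precompact if every sequence in `W` has a
weak-Cauchy subsequence. -/
def IsWeaklyPrecompact {X : Type*} [NormedAddCommGroup X] [NormedSpace ℝ X]
    (W : Set X) : Prop :=
  ∀ x : ℕ → X, (∀ n, x n ∈ W) →
    ∃ φ : ℕ → ℕ, StrictMono φ ∧
      ∀ f : StrongDual ℝ X, ∃ L : ℝ, Tendsto (fun j => f (x (φ j))) atTop (𝓝 L)

section InfiniteSets

open Set

theorem exists_fusion_seq {α : Type*} [Nonempty α] {M : Set ℕ} (hM : M.Infinite)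
    (P : ℕ → ℕ → α → Set ℕ → Prop)
    (h : ∀ k (R : Set ℕ), R ⊆ M → R.Infinite → ∃ n ∈ R, ∃ a, ∃ R' ⊆ R,
      R'.Infinite ∧ (∀ m ∈ R', n < m) ∧ P k n a R') :
    ∃ (n : ℕ → ℕ) (a : ℕ → α) (R : ℕ → Set ℕ), StrictMono n ∧ (∀ k, n k ∈ M) ∧
      (∀ k, (range n \ R k).Finite) ∧ ∀ k, P k (n k) (a k) (R k) := by
  choose! n hn a R' hR'R hR'inf hlt hP using h
  let Rs : ℕ → Set ℕ := fun k => Nat.rec M (fun k R => R' k R) k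
  have hRs : ∀ k, Rs k ⊆ M ∧ (Rs k).Infinite := by
    intro k
    induction k with
    | zero => exact ⟨subset_rfl, hM⟩
    | succ k ih => exact ⟨(hR'R k _ ih.1 ih.2).trans ih.1, hR'inf k _ ih.1 ih.2⟩
  have hanti : Antitone Rs :=
    antitone_nat_of_succ_le fun k => hR'R k _ (hRs k).1 (hRs k).2
  let N : ℕ → ℕ := fun k => n k (Rs k)
  have hmem : ∀ k, N k ∈ Rs k := fun k => hn k _ (hRs k).1 (hRs k).2
  refine ⟨N, fun k => a k (Rs k), fun k => Rs (k + 1),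
    strictMono_nat_of_lt_succ fun k => hlt k _ (hRs k).1 (hRs k).2 _ (hmem (k + 1)),
    fun k => (hRs k).1 (hmem k), fun k => ((finite_Iic k).image N).subset ?_,
    fun k => hP k _ (hRs k).1 (hRs k).2⟩
  rintro _ ⟨⟨j, rfl⟩, hj⟩
  exact ⟨j, mem_Iic.2 (not_lt.1 fun hkj => hj (hanti hkj (hmem j))), rfl⟩

theorem exists_infinite_forall_of_forall_exists {ι : Type*} [Countable ι] {Q : ι → Set ℕ → Prop}
    (hQ : ∀ i M M', Q i M → (M' \ M).Finite → Q i M')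
    (hex : ∀ i M, M.Infinite → ∃ M' ⊆ M, M'.Infinite ∧ Q i M') :
    ∃ M : Set ℕ, M.Infinite ∧ ∀ i, Q i M := by
  rcases isEmpty_or_nonempty ι with hι | hι
  · exact ⟨univ, infinite_univ, isEmptyElim⟩
  obtain ⟨e, he⟩ := exists_surjective_nat ι
  have hstep : ∀ k (R : Set ℕ), R ⊆ univ → R.Infinite → ∃ n ∈ R, ∃ _ : Unit, ∃ R' ⊆ R,
      R'.Infinite ∧ (∀ m ∈ R', n < m) ∧ Q (e k) R' := by
    intro k R _ hR
    obtain ⟨n, hn⟩ := hR.nonempty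
    obtain ⟨M', hM'R, hM', hQM'⟩ := hex (e k) R hR
    refine ⟨n, hn, (), M' \ Iic n, sdiff_subset.trans hM'R, hM'.sdiff (finite_Iic n),
      fun m hm => not_le.1 hm.2, hQ _ _ _ hQM' ?_⟩
    simp
  obtain ⟨n, -, R, hn, -, hnR, hQR⟩ := exists_fusion_seq infinite_univ _ hstep
  refine ⟨range n, infinite_range_of_injective hn.injective, fun i => ?_⟩
  obtain ⟨k, rfl⟩ := he i
  exact hQ _ _ _ (hQR k) (hnR k)

theorem exists_infinite_setOf_eq {α : Type*} {a : ℕ → α} {s : Set α} (hs : s.Finite)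
    (ha : ∀ k, a k ∈ s) : ∃ y, {k | a k = y}.Infinite := by
  by_contra! h
  exact infinite_univ ((hs.biUnion fun y _ => h y).subset fun k _ => mem_biUnion (ha k) rfl)

end InfiniteSets

namespace Rosenthal

variable {S : Type*} {A B : ℕ → Set S}

def InfOften (A : ℕ → Set S) (M : Set ℕ) (x : S) : Prop := {n ∈ M | x ∈ A n}.Infinite

def patternSet (A B : ℕ → Set S) (F G : Finset ℕ) (M : Set ℕ) : Set S :=
  {x | (∀ n ∈ F, x ∈ A n) ∧ (∀ n ∈ G, x ∈ B n) ∧ InfOften A M x ∧ InfOften B M x}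

def IsRich (A B : ℕ → Set S) (F G : Finset ℕ) (M : Set ℕ) : Prop :=
  ∀ M' ⊆ M, M'.Infinite → (patternSet A B F G M').Nonempty

def IsRichReservoir (A B : ℕ → Set S) (T : Finset ℕ) (M : Set ℕ) : Prop :=
  M.Infinite ∧ ∀ F ⊆ T, ∀ G ⊆ T, Disjoint F G → IsRich A B F G M

theorem InfOften.of_sdiff_finite {M M' : Set ℕ} {x : S} (hx : InfOften A M x)
    (hM : (M \ M').Finite) : InfOften A M' x :=
  (hx.sdiff hM).mono fun _ hn => ⟨not_not.1 fun h => hn.2 ⟨hn.1.1, h⟩, hn.1.2⟩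

theorem patternSet_swap (F G : Finset ℕ) (M : Set ℕ) :
    patternSet A B F G M = patternSet B A G F M := by
  ext x
  simp only [patternSet, Set.mem_ofPred_eq]
  tauto

theorem IsRichReservoir.swap {T : Finset ℕ} {M : Set ℕ} (h : IsRichReservoir A B T M) :
    IsRichReservoir B A T M :=
  ⟨h.1, fun F hF G hG hFG M' hM' hinf => by
    rw [← patternSet_swap]; exact h.2 G hG F hF hFG.symm M' hM' hinf⟩

theorem IsRichReservoir.exists_patternSet_insert_eq_empty {T : Finset ℕ} {M R : Set ℕ}
    (hT : IsRichReservoir A B T M) (hRM : R ⊆ M) (hR : R.Infinite) {n : ℕ}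
    (hn : ¬IsRichReservoir A B (insert n T) R) :
    ∃ F ⊆ T, ∃ G ⊆ T, Disjoint F G ∧ ∃ R' ⊆ R, R'.Infinite ∧
      (patternSet A B (insert n F) G R' = ∅ ∨ patternSet A B F (insert n G) R' = ∅) := by
  simp only [IsRichReservoir, hR, true_and, not_forall] at hn
  obtain ⟨F, hF, G, hG, hFG, hnot⟩ := hn
  simp only [IsRich, not_forall, Set.not_nonempty_iff_eq_empty] at hnot
  obtain ⟨R', hR'R, hR', hempty⟩ := hnot
  have hFT : F.erase n ⊆ T := Finset.subset_insert_iff.1 hF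
  have hGT : G.erase n ⊆ T := Finset.subset_insert_iff.1 hG
  by_cases hnF : n ∈ F
  · rw [Finset.erase_eq_of_notMem (Finset.disjoint_left.1 hFG hnF)] at hGT
    refine ⟨F.erase n, hFT, G, hGT, hFG.mono_left (Finset.erase_subset _ _), R', hR'R, hR',
      Or.inl ?_⟩
    rwa [Finset.insert_erase hnF]
  rw [Finset.erase_eq_of_notMem hnF] at hFT
  by_cases hnG : n ∈ G
  · refine ⟨F, hFT, G.erase n, hGT, hFG.mono_right (Finset.erase_subset _ _), R', hR'R, hR',
      Or.inr ?_⟩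
    rwa [Finset.insert_erase hnG]
  rw [Finset.erase_eq_of_notMem hnG] at hGT
  obtain ⟨x, hx⟩ := hT.2 F hFT G hGT hFG R' (hR'R.trans hRM) hR'
  simp [hempty] at hx

theorem IsRichReservoir.false_of_patternSet_insert_eq_empty {T : Finset ℕ} {M : Set ℕ}
    (hT : IsRichReservoir A B T M) {F G : Finset ℕ} (hF : F ⊆ T) (hG : G ⊆ T)
    (hFG : Disjoint F G) {n : ℕ → ℕ} (hn : StrictMono n) (hnM : ∀ k, n k ∈ M)
    {R : ℕ → Set ℕ} (hnR : ∀ k, (Set.range n \ R k).Finite) {K : Set ℕ} (hK : K.Infinite)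
    (hempty : ∀ k ∈ K, patternSet A B (insert (n k) F) G (R k) = ∅) : False := by
  obtain ⟨x, hxF, hxG, hxA, hxB⟩ := hT.2 F hF G hG hFG (n '' K)
    (by rintro _ ⟨k, -, rfl⟩; exact hnM k) (hK.image hn.injective.injOn)
  obtain ⟨_, ⟨⟨k, hk, rfl⟩, hxk⟩⟩ := hxA.nonempty
  have htail : (n '' K \ R k).Finite :=
    (hnR k).subset (Set.sdiff_subset_sdiff_left (Set.image_subset_range _ _))
  have hx : x ∈ patternSet A B (insert (n k) F) G (R k) :=
    ⟨Finset.forall_mem_insert _ _ _ |>.2 ⟨hxk, hxF⟩, hxG, hxA.of_sdiff_finite htail,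
      hxB.of_sdiff_finite htail⟩
  simp [hempty k hk] at hx

/- If no index beyond `b` can be added, every reservoir contains a point `n` and an infinite part
on which some pattern through `n` is void. Fusing these choices and fixing the pattern by
pigeonhole, richness of that pattern on the fused points produces a point realising one of the
void patterns. -/
theorem IsRichReservoir.exists_insert {T : Finset ℕ} {M : Set ℕ} (hT : IsRichReservoir A B T M)
    (b : ℕ) : ∃ n, b < n ∧ ∃ M', IsRichReservoir A B (insert n T) M' := by
  by_contra! hcon
  have hbad : ∀ (_ : ℕ) (R : Set ℕ), R ⊆ M → R.Infinite → ∃ n ∈ R,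
      ∃ p : Bool × Finset ℕ × Finset ℕ, ∃ R' ⊆ R, R'.Infinite ∧ (∀ m ∈ R', n < m) ∧
        p.2.1 ⊆ T ∧ p.2.2 ⊆ T ∧ Disjoint p.2.1 p.2.2 ∧
        patternSet A B (if p.1 then insert n p.2.1 else p.2.1)
          (if p.1 then p.2.2 else insert n p.2.2) R' = ∅ := by
    intro _ R hRM hR
    obtain ⟨n, hnR, hbn⟩ := hR.exists_gt b
    obtain ⟨F, hF, G, hG, hFG, R', hR'R, hR', hside⟩ :=
      hT.exists_patternSet_insert_eq_empty (Set.sdiff_subset.trans hRM)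
        (hR.sdiff (Set.finite_Iic n)) (hcon n hbn _)
    have hgt : ∀ m ∈ R', n < m := fun m hm => not_le.1 (hR'R hm).2
    rcases hside with h | h
    · exact ⟨n, hnR, (true, F, G), R', hR'R.trans Set.sdiff_subset, hR', hgt, hF, hG, hFG, h⟩
    · exact ⟨n, hnR, (false, F, G), R', hR'R.trans Set.sdiff_subset, hR', hgt, hF, hG, hFG, h⟩
  obtain ⟨n, p, R, hn, hnM, hnR, hP⟩ := exists_fusion_seq hT.1 _ hbad
  obtain ⟨⟨side, F, G⟩, hK⟩ := exists_infinite_setOf_eq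
    (Finset.finite_toSet (Finset.univ ×ˢ T.powerset ×ˢ T.powerset)) (a := p)
    (fun k => by simp [(hP k).1, (hP k).2.1])
  obtain ⟨k₀, hk₀⟩ := hK.nonempty
  obtain ⟨hF, hG, hFG, -⟩ := hP k₀
  simp only [Set.mem_ofPred_eq] at hk₀
  simp only [hk₀] at hF hG hFG
  have hempty := fun k (hk : p k = (side, F, G)) => by simpa [hk] using (hP k).2.2.2
  cases side with
  | true => exact hT.false_of_patternSet_insert_eq_empty hF hG hFG hn hnM hnR hK hempty
  | false =>
    refine hT.swap.false_of_patternSet_insert_eq_empty hG hF hFG.symm hn hnM hnR hK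
      fun k hk => ?_
    rw [← patternSet_swap]
    exact hempty k hk

theorem IsRichReservoir.exists_independent {M : Set ℕ} (hM : IsRichReservoir A B ∅ M) :
    ∃ ψ : ℕ → ℕ, StrictMono ψ ∧ ∀ F G : Finset ℕ, Disjoint F G →
      ∃ x, (∀ j ∈ F, x ∈ A (ψ j)) ∧ ∀ j ∈ G, x ∈ B (ψ j) := by
  classical
  choose! next hlt hnext using fun (T : Finset ℕ) (b : ℕ) (h : ∃ M, IsRichReservoir A B T M) =>
    h.elim fun _ hT => hT.exists_insert b
  let st : ℕ → Finset ℕ × ℕ :=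
    fun k => Nat.rec (∅, 0) (fun _ s => (insert (next s.1 s.2) s.1, next s.1 s.2)) k
  have hst : ∀ k, ∃ M, IsRichReservoir A B (st k).1 M := by
    intro k
    induction k with
    | zero => exact ⟨M, hM⟩
    | succ k ih => exact hnext _ _ ih
  let ψ : ℕ → ℕ := fun k => (st (k + 1)).2
  have hψ : StrictMono ψ := strictMono_nat_of_lt_succ fun k => hlt _ _ (hst (k + 1))
  have hrange : ∀ k, (st k).1 = (Finset.range k).image ψ := by
    intro k
    induction k with
    | zero => rfl
    | succ k ih => rw [Finset.range_add_one, Finset.image_insert, ← ih]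
  refine ⟨ψ, hψ, fun F G hFG => ?_⟩
  obtain ⟨K, hK⟩ := Finset.exists_nat_subset_range (F ∪ G)
  obtain ⟨M', hM'⟩ := hst K
  rw [hrange] at hM'
  obtain ⟨x, hxF, hxG, -⟩ := hM'.2 _ (Finset.image_subset_image (Finset.union_subset_left hK)) _
    (Finset.image_subset_image (Finset.union_subset_right hK))
    ((Finset.disjoint_image hψ.injective).2 hFG) M' subset_rfl hM'.1
  exact ⟨x, fun j hj => hxF _ (Finset.mem_image_of_mem ψ hj),
    fun j hj => hxG _ (Finset.mem_image_of_mem ψ hj)⟩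

theorem exists_independent_or_exists_infinite {ι : Type*} [Countable ι] (A B : ι → ℕ → Set S) :
    (∃ i, ∃ ψ : ℕ → ℕ, StrictMono ψ ∧ ∀ F G : Finset ℕ, Disjoint F G →
      ∃ x, (∀ j ∈ F, x ∈ A i (ψ j)) ∧ ∀ j ∈ G, x ∈ B i (ψ j)) ∨
    ∃ M : Set ℕ, M.Infinite ∧ ∀ i x, ¬(InfOften (A i) M x ∧ InfOften (B i) M x) := by
  by_cases h : ∃ i M, IsRichReservoir (A i) (B i) ∅ M
  · obtain ⟨i, M, hM⟩ := h
    exact Or.inl ⟨i, hM.exists_independent⟩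
  push Not at h
  refine Or.inr (exists_infinite_forall_of_forall_exists (fun i M M' hM hfin x hx =>
    hM x ⟨hx.1.of_sdiff_finite hfin, hx.2.of_sdiff_finite hfin⟩) fun i M hM => ?_)
  have hpoor : ¬IsRich (A i) (B i) ∅ ∅ M := fun hR => h i M ⟨hM, fun F hF G hG _ => by
    rwa [Finset.subset_empty.1 hF, Finset.subset_empty.1 hG]⟩
  simp only [IsRich, not_forall, Set.not_nonempty_iff_eq_empty] at hpoor
  obtain ⟨M', hM'M, hM', hempty⟩ := hpoor
  exact ⟨M', hM'M, hM', fun x hx => (hempty ▸ ⟨by simp, by simp, hx.1, hx.2⟩ : x ∈ (∅ : Set S))⟩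

end Rosenthal

section WeakCauchy

variable {X : Type*} [NormedAddCommGroup X] [NormedSpace ℝ X]

def IsWeakCauchySeq (x : ℕ → X) : Prop :=
  ∀ f : StrongDual ℝ X, ∃ L : ℝ, Tendsto (fun j => f (x j)) atTop (𝓝 L)

theorem IsWeakCauchySeq.of_forall_norm_le_one {x : ℕ → X}
    (h : ∀ f : StrongDual ℝ X, ‖f‖ ≤ 1 → ∃ L : ℝ, Tendsto (fun j => f (x j)) atTop (𝓝 L)) :
    IsWeakCauchySeq x := by
  intro f
  have hc : 0 < ‖f‖ + 1 := by positivity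
  obtain ⟨L, hL⟩ := h ((‖f‖ + 1)⁻¹ • f) (by
    rw [norm_smul, norm_inv, Real.norm_of_nonneg hc.le, inv_mul_le_iff₀ hc]
    linarith)
  refine ⟨(‖f‖ + 1) * L, ?_⟩
  convert hL.const_mul (‖f‖ + 1) using 2 with j
  simp [hc.ne']

theorem IsWeakCauchySeq.of_tendsto_sub {x y : ℕ → X} (hy : IsWeakCauchySeq y)
    (hxy : Tendsto (fun j => x j - y j) atTop (𝓝 0)) : IsWeakCauchySeq x := by
  intro f
  obtain ⟨L, hL⟩ := hy f
  refine ⟨L, ?_⟩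
  simpa using hL.add ((f.continuous.tendsto 0).comp hxy)

theorem IsWeakCauchySeq.bddAbove_norm {x : ℕ → X} (hx : IsWeakCauchySeq x) :
    BddAbove (Set.range fun j => ‖x j‖) := by
  let g : ℕ → StrongDual ℝ (StrongDual ℝ X) := fun j => NormedSpace.inclusionInDoubleDualLi ℝ (x j)
  have hg : ∀ f, ∃ C, ∀ j, ‖g j f‖ ≤ C := fun f => by
    obtain ⟨L, hL⟩ := hx f
    obtain ⟨C, hC⟩ := hL.norm.bddAbove_range
    exact ⟨C, fun j => hC ⟨j, rfl⟩⟩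
  obtain ⟨C, hC⟩ := banach_steinhaus hg
  exact ⟨C, by rintro _ ⟨j, rfl⟩; simpa [g, LinearIsometry.norm_map] using hC j⟩

theorem IsWeaklyPrecompact.isBounded {W : Set X} (hW : IsWeaklyPrecompact W) :
    Bornology.IsBounded W := by
  by_contra hunb
  have hlarge : ∀ n : ℕ, ∃ w ∈ W, (n : ℝ) < ‖w‖ := fun n => by
    by_contra! h
    exact hunb (isBounded_iff_forall_norm_le.2 ⟨n, h⟩)
  choose w hwW hw using hlarge
  obtain ⟨φ, hφ, hwφ⟩ := hW w hwW
  obtain ⟨C, hC⟩ := IsWeakCauchySeq.bddAbove_norm (x := w ∘ φ) hwφ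
  obtain ⟨j, hj⟩ := exists_nat_gt C
  have hjφ : (j : ℝ) ≤ φ j := by exact_mod_cast hφ.id_le j
  have hCj : ‖w (φ j)‖ ≤ C := hC ⟨j, rfl⟩
  linarith [hw (φ j)]

theorem IsWeaklyPrecompact.closure {W : Set X} (hW : IsWeaklyPrecompact W) :
    IsWeaklyPrecompact (closure W) := by
  intro x hx
  choose w hwW hw using fun n =>
    Metric.mem_closure_iff.1 (hx n) (1 / (n + 1)) Nat.one_div_pos_of_nat
  obtain ⟨φ, hφ, hwφ⟩ := hW w hwW
  have hxw : Tendsto (fun n => x n - w n) atTop (𝓝 0) :=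
    squeeze_zero_norm (fun n => (dist_eq_norm (x n) (w n) ▸ hw n).le)
      tendsto_one_div_add_atTop_nhds_zero_nat
  exact ⟨φ, hφ, IsWeakCauchySeq.of_tendsto_sub (y := w ∘ φ) hwφ (hxw.comp hφ.tendsto_atTop)⟩

theorem exists_independent_of_not_isWeakCauchySeq {x : ℕ → X} {C : ℝ} (hx : ∀ n, ‖x n‖ ≤ C)
    (h : ¬∃ φ : ℕ → ℕ, StrictMono φ ∧ IsWeakCauchySeq (x ∘ φ)) :
    ∃ r s : ℝ, r < s ∧ ∃ ψ : ℕ → ℕ, StrictMono ψ ∧ ∀ F G : Finset ℕ, Disjoint F G →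
      ∃ f : StrongDual ℝ X, ‖f‖ ≤ 1 ∧ (∀ j ∈ F, f (x (ψ j)) < r) ∧ ∀ j ∈ G, s < f (x (ψ j)) := by
  let A : {q : ℚ × ℚ // q.1 < q.2} → ℕ → Set (Metric.closedBall (0 : StrongDual ℝ X) 1) :=
    fun q n => {f | f.1 (x n) < q.1.1}
  let B : {q : ℚ × ℚ // q.1 < q.2} → ℕ → Set (Metric.closedBall (0 : StrongDual ℝ X) 1) :=
    fun q n => {f | q.1.2 < f.1 (x n)}
  rcases Rosenthal.exists_independent_or_exists_infinite A B with ⟨q, ψ, hψ, hind⟩ | ⟨M, hM, hosc⟩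
  · refine ⟨q.1.1, q.1.2, by exact_mod_cast q.2, ψ, hψ, fun F G hFG => ?_⟩
    obtain ⟨f, hF, hG⟩ := hind F G hFG
    exact ⟨f.1, mem_closedBall_zero_iff.1 f.2, hF, hG⟩
  refine (h ⟨Nat.nth (· ∈ M), Nat.nth_strictMono hM,
    IsWeakCauchySeq.of_forall_norm_le_one fun f hf => ?_⟩).elim
  have hbd : ∀ n, |f (x n)| ≤ C := fun n =>
    (f.le_opNorm (x n)).trans ((mul_le_of_le_one_left (norm_nonneg _) hf).trans (hx n))
  have hinf : ∀ p : X → Prop, (∃ᶠ j in atTop, p (x (Nat.nth (· ∈ M) j))) →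
      {n ∈ M | p (x n)}.Infinite := fun p hp =>
    ((Nat.frequently_atTop_iff_infinite.1 hp).image (Nat.nth_strictMono hM).injective.injOn).mono
      (by rintro _ ⟨j, hj, rfl⟩; exact ⟨Nat.nth_mem_of_infinite hM j, hj⟩)
  refine tendsto_of_no_upcrossings Rat.denseRange_cast ?_
    (isBoundedUnder_of ⟨C, fun j => (le_abs_self _).trans (hbd _)⟩)
    (isBoundedUnder_of ⟨-C, fun j => neg_le_of_abs_le (hbd _)⟩)
  rintro _ ⟨a, rfl⟩ _ ⟨b, rfl⟩ hab ⟨ha, hb⟩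
  exact hosc ⟨(a, b), by exact_mod_cast hab⟩ ⟨f, mem_closedBall_zero_iff.2 hf⟩
    ⟨hinf (fun y => f y < a) ha, hinf (fun y => b < f y) hb⟩

end WeakCauchy

theorem Metric.totallyBounded_of_forall_exists_cauchySeq {α : Type*} [PseudoMetricSpace α]
    {s : Set α} (h : ∀ u : ℕ → α, (∀ n, u n ∈ s) → ∃ φ : ℕ → ℕ, StrictMono φ ∧ CauchySeq (u ∘ φ)) :
    TotallyBounded s := by
  refine Metric.totallyBounded_iff.2 fun ε hε => ?_
  by_contra! hs
  obtain ⟨u, hu⟩ := Set.seq_of_forall_finite_exists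
    (P := fun c t => c ∈ s ∧ ∀ y ∈ t, ε ≤ dist c y) fun t ht => by
      obtain ⟨c, hcs, hc⟩ := Set.not_subset.1 (hs t ht)
      simp only [Set.mem_iUnion₂, Metric.mem_ball, not_exists, not_lt] at hc
      exact ⟨c, hcs, hc⟩
  obtain ⟨φ, hφ, hcau⟩ := h u fun n => (hu n).1
  obtain ⟨N, hN⟩ := Metric.cauchySeq_iff'.1 hcau ε hε
  exact (hN (N + 1) N.le_succ).not_ge ((hu (φ (N + 1))).2 _ ⟨φ N, hφ N.lt_succ_self, rfl⟩)

theorem TotallyBounded.exists_dist_lt {α : Type*} [PseudoMetricSpace α] {s : Set α}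
    (hs : TotallyBounded s) {u : ℕ → α} (hu : ∀ n, u n ∈ s) {δ : ℝ} (hδ : 0 < δ) :
    ∃ m n, m < n ∧ dist (u m) (u n) < δ := by
  obtain ⟨t, ht, hst⟩ := Metric.totallyBounded_iff.1 hs (δ / 2) (half_pos hδ)
  choose c hct hc using fun n => by simpa using hst (hu n)
  obtain ⟨m, n, hmn, hcmn⟩ := ht.exists_lt_map_eq_of_forall_mem hct
  refine ⟨m, n, hmn, (dist_triangle_right _ _ (c m)).trans_lt ?_⟩
  linarith [hc m, hc n, hcmn ▸ hc n]

namespace MeasureTheory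

variable {Ω : Type*} [MeasurableSpace Ω] {μ : Measure Ω}

theorem Integrable.dist_toL1 {f g : Ω → ℝ} (hf : Integrable f μ) (hg : Integrable g μ) :
    dist (hf.toL1 f) (hg.toL1 g) = ∫ ω, |f ω - g ω| ∂μ := by
  rw [L1.dist_eq_integral_dist]
  refine integral_congr_ae ?_
  filter_upwards [hf.coeFn_toL1, hg.coeFn_toL1] with ω h1 h2
  rw [h1, h2, Real.dist_eq]

theorem Integrable.toL1_finsetSum_smul {ι : Type*} (s : Finset ι) (c : ι → ℝ) {f : ι → Ω → ℝ}
    (hf : ∀ i, Integrable (f i) μ) :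
    (integrable_finsetSum' s fun i _ => (hf i).smul (c i)).toL1 (∑ i ∈ s, c i • f i) =
      ∑ i ∈ s, c i • (hf i).toL1 (f i) := by
  classical
  induction s using Finset.induction_on with
  | empty => simp
  | insert a s ha ih => simp only [Finset.sum_insert ha]; rw [← ih]; rfl

theorem tendsto_toL1_of_tendsto [IsFiniteMeasure μ] {f : ℕ → Ω → ℝ} {g : Ω → ℝ}
    (hf : ∀ n, Integrable (f n) μ) (hg : Integrable g μ) {C : ℝ} (hC : ∀ n ω, |f n ω| ≤ C)
    (hlim : ∀ ω, Tendsto (fun n => f n ω) atTop (𝓝 (g ω))) :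
    Tendsto (fun n => (hf n).toL1 (f n)) atTop (𝓝 (hg.toL1 g)) := by
  have hgC : ∀ ω, |g ω| ≤ C := fun ω =>
    le_of_tendsto ((continuous_abs.tendsto _).comp (hlim ω)) (Eventually.of_forall fun n => hC n ω)
  rw [tendsto_iff_dist_tendsto_zero]
  simp_rw [Integrable.dist_toL1]
  have h0 : Tendsto (fun n => ∫ ω, |f n ω - g ω| ∂μ) atTop (𝓝 (∫ _, (0 : ℝ) ∂μ)) := by
    refine tendsto_integral_of_dominated_convergence (fun _ => C + C)
      (fun n => ((hf n).sub hg).abs.aestronglyMeasurable) (integrable_const _)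
      (fun n => Eventually.of_forall fun ω => ?_) (Eventually.of_forall fun ω => ?_)
    · rw [Real.norm_eq_abs, abs_abs]
      exact (abs_sub _ _).trans (add_le_add (hC n ω) (hgC ω))
    · simpa using ((hlim ω).sub_const (g ω)).abs
  simpa using h0

/-- By dominated convergence the `h k` form a totally bounded subset of `L¹`, hence so does
their convex hull. -/
theorem exists_integral_abs_sub_lt [IsFiniteMeasure μ] {h : ℕ → Ω → ℝ}
    (hm : ∀ k, Measurable (h k)) {C : ℝ} (hC : ∀ k ω, |h k ω| ≤ C)
    (hsub : ∀ u : ℕ → ℕ, ∃ φ : ℕ → ℕ, StrictMono φ ∧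
      ∀ ω, ∃ L, Tendsto (fun j => h (u (φ j)) ω) atTop (𝓝 L))
    {N : ℕ → ℕ} {a : ℕ → ℕ → ℝ} {κ : ℕ → ℕ → ℕ} (ha0 : ∀ t i, 0 ≤ a t i)
    (ha1 : ∀ t, ∑ i ∈ Finset.range (N t), a t i = 1) {δ : ℝ} (hδ : 0 < δ) :
    ∃ t t', t ≠ t' ∧ ∫ ω, |∑ i ∈ Finset.range (N t), a t i * h (κ t i) ω -
      ∑ i ∈ Finset.range (N t'), a t' i * h (κ t' i) ω| ∂μ < δ := by
  have hint : ∀ k, Integrable (h k) μ := fun k =>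
    .of_bound (hm k).aestronglyMeasurable C (ae_of_all _ fun ω => (hC k ω))
  have hS : TotallyBounded (Set.range fun k => (hint k).toL1 (h k)) := by
    refine Metric.totallyBounded_of_forall_exists_cauchySeq fun u hu => ?_
    choose k hk using hu
    obtain ⟨φ, hφ, hlim⟩ := hsub k
    choose L hL using hlim
    have hLint : Integrable L μ := by
      refine .of_bound (measurable_of_tendsto_metrizable (fun j => hm _)
        (tendsto_pi_nhds.2 hL)).aestronglyMeasurable C (ae_of_all _ fun ω => ?_)
      exact le_of_tendsto ((continuous_abs.tendsto _).comp (hL ω))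
        (Eventually.of_forall fun j => hC _ ω)
    have huφ : u ∘ φ = fun j => (hint _).toL1 (h (k (φ j))) := funext fun j => (hk (φ j)).symm
    refine ⟨φ, hφ, ?_⟩
    rw [huφ]
    exact (tendsto_toL1_of_tendsto (fun j => hint _) hLint (fun j => hC _) hL).cauchySeq
  let HS : ℕ → Ω →₁[μ] ℝ := fun t =>
    ∑ i ∈ Finset.range (N t), a t i • (hint (κ t i)).toL1 (h (κ t i))
  have hHS : ∀ t, HS t ∈ convexHull ℝ (Set.range fun k => (hint k).toL1 (h k)) := fun t =>
    (convex_convexHull ℝ _).sum_mem (fun i _ => ha0 t i) (ha1 t)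
      fun i _ => subset_convexHull ℝ _ ⟨_, rfl⟩
  obtain ⟨t, t', htt', hdist⟩ := hS.convexHull.exists_dist_lt hHS hδ
  refine ⟨t, t', htt'.ne, ?_⟩
  simp only [HS, ← Integrable.toL1_finsetSum_smul _ _ fun i => hint _,
    Integrable.dist_toL1] at hdist
  simpa only [Finset.sum_apply, Pi.smul_apply, smul_eq_mul] using hdist

end MeasureTheory

section MeasurableSelection

open Set

theorem tendsto_of_isMinOn_of_antitone {E : Type*} [TopologicalSpace E] [T2Space E]
    {Q : E → ℝ} {K : ℕ → Set E} (hK : Antitone K) (hKc : ∀ m, IsCompact (K m))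
    (hQ : ContinuousOn Q (K 0)) {g : E} (hg : g ∈ ⋂ m, K m)
    (huniq : ∀ a ∈ ⋂ m, K m, Q a ≤ Q g → a = g) {p : ℕ → E} (hp : ∀ m, p m ∈ K m)
    (hpmin : ∀ m, IsMinOn Q (K m) (p m)) : Tendsto p atTop (𝓝 g) := by
  refine (hKc 0).tendsto_nhds_of_unique_mapClusterPt
    (Eventually.of_forall fun m => hK (Nat.zero_le m) (hp m)) fun a _ ha => huniq a ?_ ?_
  · exact mem_iInter.2 fun m => (hKc m).isClosed.mem_of_mapClusterPt ha
      ((eventually_ge_atTop m).mono fun n hn => hK hn (hp n))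
  · have hclosed : IsClosed (K 0 ∩ Q ⁻¹' Iic (Q g)) :=
      hQ.preimage_isClosed_of_isClosed (hKc 0).isClosed isClosed_Iic
    exact (hclosed.mem_of_mapClusterPt ha (Eventually.of_forall fun m =>
      ⟨hK (Nat.zero_le m) (hp m), isMinOn_iff.1 (hpmin m) g (mem_iInter.1 hg m)⟩)).2

def weightedSqNorm (p : ℕ → ℝ) : ℝ := ∑' k, (1 / 2 : ℝ) ^ k * p k ^ 2

variable {C : ℝ}

theorem weightedSqNorm_term_le {p : ℕ → ℝ} (hp : p ∈ univ.pi fun _ => Icc (-C) C) (k : ℕ) :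
    (1 / 2 : ℝ) ^ k * p k ^ 2 ≤ (1 / 2 : ℝ) ^ k * C ^ 2 :=
  mul_le_mul_of_nonneg_left (sq_le_sq' (hp k trivial).1 (hp k trivial).2) (by positivity)

theorem summable_weightedSqNorm {p : ℕ → ℝ} (hp : p ∈ univ.pi fun _ => Icc (-C) C) :
    Summable fun k => (1 / 2 : ℝ) ^ k * p k ^ 2 :=
  (summable_geometric_two.mul_right (C ^ 2)).of_nonneg_of_le (fun k => by positivity)
    (weightedSqNorm_term_le hp)

theorem continuousOn_weightedSqNorm (C : ℝ) :
    ContinuousOn weightedSqNorm (univ.pi fun _ => Icc (-C) C) :=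
  continuousOn_tsum (fun k => (continuous_const.mul ((continuous_apply k).pow 2)).continuousOn)
    (summable_geometric_two.mul_right (C ^ 2)) fun k p hp => by
      rw [Real.norm_of_nonneg (by positivity)]
      exact weightedSqNorm_term_le hp k

theorem strictConvexOn_weightedSqNorm (C : ℝ) :
    StrictConvexOn ℝ (univ.pi fun _ => Icc (-C) C) weightedSqNorm := by
  have hconv : Convex ℝ (univ.pi fun _ : ℕ => Icc (-C) C) := convex_pi fun _ _ => convex_Icc _ _
  refine ⟨hconv, fun p hp q hq hpq a b ha hb hab => ?_⟩
  obtain ⟨k₀, hk₀⟩ := Function.ne_iff.1 hpq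
  have hgap : ∀ k, a * ((1 / 2 : ℝ) ^ k * p k ^ 2) + b * ((1 / 2 : ℝ) ^ k * q k ^ 2) -
      (1 / 2 : ℝ) ^ k * (a • p + b • q) k ^ 2 = (1 / 2 : ℝ) ^ k * (a * b) * (p k - q k) ^ 2 := by
    intro k
    obtain rfl : b = 1 - a := by linarith
    simp only [Pi.add_apply, Pi.smul_apply, smul_eq_mul]
    ring
  calc weightedSqNorm (a • p + b • q)
      < ∑' k, (a * ((1 / 2 : ℝ) ^ k * p k ^ 2) + b * ((1 / 2 : ℝ) ^ k * q k ^ 2)) := by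
        refine Summable.tsum_lt_tsum (i := k₀) (fun k => ?_) ?_
          (summable_weightedSqNorm (hconv hp hq ha.le hb.le hab))
          (((summable_weightedSqNorm hp).mul_left a).add ((summable_weightedSqNorm hq).mul_left b))
        · have hnn : 0 ≤ (1 / 2 : ℝ) ^ k * (a * b) * (p k - q k) ^ 2 := by positivity
          linarith [hgap k]
        · have hne : p k₀ - q k₀ ≠ 0 := sub_ne_zero.2 hk₀
          have hpos : 0 < (1 / 2 : ℝ) ^ k₀ * (a * b) * (p k₀ - q k₀) ^ 2 := by positivity
          linarith [hgap k₀]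
    _ = a • weightedSqNorm p + b • weightedSqNorm q := by
        rw [Summable.tsum_add ((summable_weightedSqNorm hp).mul_left a)
          ((summable_weightedSqNorm hq).mul_left b), tsum_mul_left, tsum_mul_left]
        rfl

/-- `g σ` is the unique minimiser of the strictly convex `weightedSqNorm` under all constraints;
it is the limit of the minimisers under the first `m` constraints, which depend on only finitely
many coordinates of `σ`. -/
theorem exists_measurable_selection {K : Set (ℕ → ℝ)} (hKc : IsCompact K)
    (hKconv : Convex ℝ K) (hKC : K ⊆ univ.pi fun _ => Icc (-C) C) {S : ℕ → Bool → Set (ℕ → ℝ)}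
    (hSc : ∀ t b, IsClosed (S t b)) (hSconv : ∀ t b, Convex ℝ (S t b))
    (hne : ∀ m (τ : Fin m → Bool), (K ∩ ⋂ i : Fin m, S i (τ i)).Nonempty) :
    ∃ g : (ℕ → Bool) → ℕ → ℝ, Measurable g ∧ ∀ σ, g σ ∈ K ∧ ∀ t, g σ ∈ S t (σ t) := by
  have hQ : ContinuousOn weightedSqNorm K := (continuousOn_weightedSqNorm C).mono hKC
  choose sel hsel hselmin using fun m (τ : Fin m → Bool) =>
    (hKc.inter_right (isClosed_iInter fun i : Fin m => hSc i (τ i))).exists_isMinOn (hne m τ)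
      (hQ.mono inter_subset_left)
  let Kσ : (ℕ → Bool) → ℕ → Set (ℕ → ℝ) := fun σ m => K ∩ ⋂ i : Fin m, S i (σ i)
  have hanti : ∀ σ, Antitone (Kσ σ) := fun σ m m' hmm' p hp =>
    ⟨hp.1, mem_iInter.2 fun i => mem_iInter.1 hp.2 (Fin.castLE hmm' i)⟩
  have hKσc : ∀ σ m, IsCompact (Kσ σ m) := fun σ m =>
    hKc.inter_right (isClosed_iInter fun i => hSc _ _)
  have hinter : ∀ σ, ⋂ m, Kσ σ m = K ∩ ⋂ t, S t (σ t) := fun σ => by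
    ext p
    simp only [Kσ, mem_iInter, mem_inter_iff]
    exact ⟨fun h => ⟨(h 0).1, fun t => (h (t + 1)).2 ⟨t, t.lt_succ_self⟩⟩,
      fun h m => ⟨h.1, fun i => h.2 i⟩⟩
  have hlimne : ∀ σ : ℕ → Bool, (K ∩ ⋂ t, S t (σ t)).Nonempty := fun σ => by
    rw [← hinter]
    exact IsCompact.nonempty_iInter_of_sequence_nonempty_isCompact_isClosed _
      (fun m => hanti σ m.le_succ) (fun m => hne m _) (hKσc σ 0) fun m => (hKσc σ m).isClosed
  choose g hg hgmin using fun σ : ℕ → Bool =>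
    (hKc.inter_right (isClosed_iInter fun t => hSc t (σ t))).exists_isMinOn (hlimne σ)
      (hQ.mono inter_subset_left)
  have hstrict : ∀ σ : ℕ → Bool, StrictConvexOn ℝ (K ∩ ⋂ t, S t (σ t)) weightedSqNorm := fun σ =>
    (strictConvexOn_weightedSqNorm C).subset (inter_subset_left.trans hKC)
      (hKconv.inter (convex_iInter fun t => hSconv _ _))
  refine ⟨g, measurable_of_tendsto_metrizable (f := fun m σ => sel m fun i => σ i)
    (fun m => (measurable_of_countable (sel m)).comp
      (measurable_pi_lambda _ fun i => measurable_pi_apply _)) (tendsto_pi_nhds.2 fun σ => ?_),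
    fun σ => ⟨(hg σ).1, mem_iInter.1 (hg σ).2⟩⟩
  refine tendsto_of_isMinOn_of_antitone (hanti σ) (hKσc σ) (hQ.mono inter_subset_left)
    (hinter σ ▸ hg σ) (fun a ha hle => ?_) (fun m => hsel m _) (fun m => hselmin m _)
  rw [hinter] at ha
  exact (hstrict σ).eq_of_isMinOn (fun x hx => hle.trans (hgmin σ hx)) (hgmin σ) ha (hg σ)

end MeasurableSelection

namespace MeasureTheory

def coinMeasure : Measure (ℕ → Bool) :=
  Measure.infinitePi fun _ => (PMF.uniformOfFintype Bool).toMeasure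

instance : IsProbabilityMeasure coinMeasure := by
  unfold coinMeasure
  infer_instance

theorem coinMeasure_eq_false_and_eq_true {t t' : ℕ} (htt' : t ≠ t') :
    coinMeasure {σ | σ t = false ∧ σ t' = true} = 1 / 4 := by
  have hpi : {σ : ℕ → Bool | σ t = false ∧ σ t' = true} =
      Set.pi ({t, t'} : Finset ℕ) fun i => if i = t then {false} else {true} := by
    ext σ
    simp [htt'.symm]
  rw [hpi, coinMeasure,
    Measure.infinitePi_pi (μ := fun _ : ℕ => (PMF.uniformOfFintype Bool).toMeasure)
      fun i _ => by split_ifs <;> exact .singleton _,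
    Finset.prod_pair htt']
  simp only [htt'.symm, if_true, if_false, PMF.toMeasure_apply_singleton _ _ (.singleton _),
    PMF.uniformOfFintype_apply, Fintype.card_bool, Nat.cast_ofNat]
  rw [← ENNReal.mul_inv (by simp) (by simp)]
  norm_num

theorem le_integral_abs_sub_of_le_of_le {u v : (ℕ → Bool) → ℝ} (hu : Integrable u coinMeasure)
    (hv : Integrable v coinMeasure) {t t' : ℕ} (htt' : t ≠ t') {r s : ℝ}
    (hur : ∀ σ, σ t = false → u σ ≤ r) (hvs : ∀ σ, σ t' = true → s ≤ v σ) :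
    (s - r) / 4 ≤ ∫ σ, |u σ - v σ| ∂coinMeasure := by
  let E := {σ : ℕ → Bool | σ t = false ∧ σ t' = true}
  have hE : MeasurableSet E := by measurability
  calc (s - r) / 4 = ∫ _ in E, (s - r) ∂coinMeasure := by
        rw [setIntegral_const, measureReal_def, coinMeasure_eq_false_and_eq_true htt']
        norm_num
        ring
    _ ≤ ∫ σ in E, |u σ - v σ| ∂coinMeasure := by
        refine setIntegral_mono_on (integrable_const _).integrableOn (hu.sub hv).abs.integrableOn hE
          fun σ hσ => ?_
        rw [abs_sub_comm]
        linarith [hur σ hσ.1, hvs σ hσ.2, le_abs_self (v σ - u σ)]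
    _ ≤ ∫ σ, |u σ - v σ| ∂coinMeasure :=
        setIntegral_le_integral (hu.sub hv).abs (Eventually.of_forall fun _ => abs_nonneg _)

end MeasureTheory

section DualProfiles

variable {X : Type*} [NormedAddCommGroup X] [NormedSpace ℝ X]

open Set

def dualProfiles (D : ℕ → X) : Set (ℕ → ℝ) :=
  (fun f : StrongDual ℝ X => fun k => f (D k)) '' Metric.closedBall 0 1

theorem isCompact_dualProfiles (D : ℕ → X) : IsCompact (dualProfiles D) :=
  (WeakDual.isCompact_closedBall (𝕜 := ℝ) (0 : StrongDual ℝ X) 1).image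
    (continuous_pi fun k => WeakDual.eval_continuous (D k))

theorem convex_dualProfiles (D : ℕ → X) : Convex ℝ (dualProfiles D) :=
  (convex_closedBall 0 1).is_linear_image ⟨fun _ _ => rfl, fun _ _ => rfl⟩

theorem dualProfiles_subset_pi {D : ℕ → X} {C : ℝ} (hD : ∀ k, ‖D k‖ ≤ C) :
    dualProfiles D ⊆ univ.pi fun _ => Icc (-C) C := by
  rintro _ ⟨f, hf, rfl⟩ k -
  exact abs_le.1 ((f.le_opNorm (D k)).trans
    ((mul_le_of_le_one_left (norm_nonneg _) (mem_closedBall_zero_iff.1 hf)).trans (hD k)))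

theorem exists_measurable_selection_dualProfiles {D : ℕ → X} {C : ℝ} (hD : ∀ k, ‖D k‖ ≤ C)
    {N : ℕ → ℕ} {a : ℕ → ℕ → ℝ} {κ : ℕ → ℕ → ℕ} {r s : ℝ}
    (hind : ∀ F G : Finset ℕ, Disjoint F G → ∃ f : StrongDual ℝ X, ‖f‖ ≤ 1 ∧
      (∀ t ∈ F, f (∑ i ∈ Finset.range (N t), a t i • D (κ t i)) < r) ∧
      ∀ t ∈ G, s < f (∑ i ∈ Finset.range (N t), a t i • D (κ t i))) :
    ∃ g : (ℕ → Bool) → ℕ → ℝ, Measurable g ∧ (∀ σ, g σ ∈ dualProfiles D) ∧ ∀ σ t,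
      (σ t = false → ∑ i ∈ Finset.range (N t), a t i * g σ (κ t i) ≤ r) ∧
      (σ t = true → s ≤ ∑ i ∈ Finset.range (N t), a t i * g σ (κ t i)) := by
  classical
  let ℓ : ℕ → (ℕ → ℝ) → ℝ := fun t p => ∑ i ∈ Finset.range (N t), a t i * p (κ t i)
  have hℓ : ∀ t, Continuous (ℓ t) := fun t =>
    continuous_finsetSum _ fun i _ => continuous_const.mul (continuous_apply _)
  have hℓlin : ∀ t, IsLinearMap ℝ (ℓ t) := fun t =>
    ⟨fun p q => by simp [ℓ, mul_add, Finset.sum_add_distrib],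
      fun c p => by simp [ℓ, Finset.mul_sum, mul_left_comm]⟩
  have hℓf : ∀ (f : StrongDual ℝ X) t, ℓ t (fun k => f (D k)) =
      f (∑ i ∈ Finset.range (N t), a t i • D (κ t i)) := fun f t => by simp [ℓ]
  let S : ℕ → Bool → Set (ℕ → ℝ) := fun t b => cond b {p | s ≤ ℓ t p} {p | ℓ t p ≤ r}
  have hSc : ∀ t b, IsClosed (S t b) := fun t b => by
    cases b
    exacts [isClosed_le (hℓ t) continuous_const, isClosed_le continuous_const (hℓ t)]
  have hSconv : ∀ t b, Convex ℝ (S t b) := fun t b => by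
    cases b
    exacts [convex_halfSpace_le (hℓlin t) r, convex_halfSpace_ge (hℓlin t) s]
  have hne : ∀ m (τ : Fin m → Bool), (dualProfiles D ∩ ⋂ i : Fin m, S i (τ i)).Nonempty := by
    intro m τ
    obtain ⟨f, hf, hF, hG⟩ := hind ((Finset.univ.filter (τ · = false)).image (↑))
      ((Finset.univ.filter (τ · = true)).image (↑)) (Finset.disjoint_left.2 fun j hj hj' => by
        obtain ⟨i, hi, rfl⟩ := Finset.mem_image.1 hj
        obtain ⟨i', hi', hii'⟩ := Finset.mem_image.1 hj'
        simp_all [Fin.ext hii'])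
    refine ⟨fun k => f (D k), ⟨f, mem_closedBall_zero_iff.2 hf, rfl⟩, mem_iInter.2 fun i => ?_⟩
    cases hτ : τ i
    · exact (hℓf f i ▸ hF i (Finset.mem_image_of_mem _ (by simpa using hτ))).le
    · exact (hℓf f i ▸ hG i (Finset.mem_image_of_mem _ (by simpa using hτ))).le
  obtain ⟨g, hg, hgmem⟩ := exists_measurable_selection (isCompact_dualProfiles D)
    (convex_dualProfiles D) (dualProfiles_subset_pi hD) hSc hSconv hne
  refine ⟨g, hg, fun σ => (hgmem σ).1, fun σ t => ⟨fun h => ?_, fun h => ?_⟩⟩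
  · simpa [S, h] using (hgmem σ).2 t
  · simpa [S, h] using (hgmem σ).2 t

end DualProfiles

theorem exists_sum_range_eq_of_mem_convexHull {E : Type*} [AddCommGroup E] [Module ℝ E]
    {s : Set E} {x : E} (hx : x ∈ convexHull ℝ s) :
    ∃ (N : ℕ) (a : ℕ → ℝ) (v : ℕ → E), (∀ i, 0 ≤ a i) ∧ ∑ i ∈ Finset.range N, a i = 1 ∧
      (∀ i, v i ∈ s) ∧ ∑ i ∈ Finset.range N, a i • v i = x := by
  obtain ⟨ι, _, w, z, hw0, hw1, hz, hwz⟩ := mem_convexHull_iff_exists_fintype.1 hx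
  obtain ⟨y, hy⟩ := convexHull_nonempty_iff.1 ⟨x, hx⟩
  let e := (Fintype.equivFin ι).symm
  let a : ℕ → ℝ := fun i => if h : i < Fintype.card ι then w (e ⟨i, h⟩) else 0
  let v : ℕ → E := fun i => if h : i < Fintype.card ι then z (e ⟨i, h⟩) else y
  refine ⟨Fintype.card ι, a, v, fun i => ?_, ?_, fun i => ?_, ?_⟩
  · unfold a; split_ifs; exacts [hw0 _, le_rfl]
  · rw [Finset.sum_range, ← hw1, ← e.sum_comp]; simp [a]
  · unfold v; split_ifs; exacts [hz _, hy]
  · rw [Finset.sum_range, ← hwz, ← e.sum_comp]; simp [a, v]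

open MeasureTheory in
theorem IsWeaklyPrecompact.convexHull {X : Type*} [NormedAddCommGroup X] [NormedSpace ℝ X]
    {W : Set X} (hW : IsWeaklyPrecompact W) : IsWeaklyPrecompact (convexHull ℝ W) := by
  intro z hz
  by_contra hnot
  obtain ⟨C, hC⟩ := isBounded_iff_forall_norm_le.1 (isBounded_convexHull.2 hW.isBounded)
  obtain ⟨r, s, hrs, ψ, -, hind⟩ :=
    exists_independent_of_not_isWeakCauchySeq (fun n => hC _ (hz n)) hnot
  choose N a v ha0 ha1 hvW hav using fun t => exists_sum_range_eq_of_mem_convexHull (hz (ψ t))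
  let D : ℕ → X := fun k => v k.unpair.1 k.unpair.2
  have hDW : ∀ k, D k ∈ W := fun k => hvW _ _
  have hDC : ∀ k, ‖D k‖ ≤ C := fun k => hC _ (subset_convexHull ℝ W (hDW k))
  obtain ⟨g, hg, hgD, hgrs⟩ := exists_measurable_selection_dualProfiles (N := N) (a := a)
    (κ := Nat.pair) hDC (by simpa only [D, Nat.unpair_pair, hav] using hind)
  have hgC : ∀ k σ, |g σ k| ≤ C := fun k σ =>
    abs_le.2 (dualProfiles_subset_pi hDC (hgD σ) k trivial)
  have hgm : ∀ k, Measurable fun σ => g σ k := fun k => (measurable_pi_apply k).comp hg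
  have hsub : ∀ u : ℕ → ℕ, ∃ φ : ℕ → ℕ, StrictMono φ ∧
      ∀ σ, ∃ L, Tendsto (fun j => g σ (u (φ j))) atTop (𝓝 L) := fun u => by
    obtain ⟨φ, hφ, hconv⟩ := hW (D ∘ u) fun j => hDW _
    refine ⟨φ, hφ, fun σ => ?_⟩
    obtain ⟨f, -, hf⟩ := hgD σ
    rw [← hf]
    exact hconv f
  obtain ⟨t, t', htt', hlt⟩ := exists_integral_abs_sub_lt (μ := coinMeasure) (κ := Nat.pair)
    hgm hgC hsub ha0 ha1 (δ := (s - r) / 4) (by linarith)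
  have hint : ∀ t, Integrable (fun σ => ∑ i ∈ Finset.range (N t), a t i * g σ (t.pair i))
      coinMeasure := fun t => integrable_finsetSum _ fun i _ =>
    (Integrable.of_bound (hgm _).aestronglyMeasurable C (ae_of_all _ (hgC _))).const_mul _
  exact hlt.not_ge (le_integral_abs_sub_of_le_of_le (hint t) (hint t') htt'
    (fun σ hσ => (hgrs σ t).1 hσ) fun σ hσ => (hgrs σ t').2 hσ)

theorem isWeaklyPrecompact_closure_convexHull_general
    (X : Type*) [NormedAddCommGroup X] [NormedSpace ℝ X]
    (W : Set X) (hW : IsWeaklyPrecompact W) :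
    IsWeaklyPrecompact (closure (convexHull ℝ W)) :=
  hW.convexHull.closure

/-- The norm-closed convex hull of a weakly precompact subset of a real
Banach space is weakly precompact. -/
theorem isWeaklyPrecompact_closure_convexHull
    (X : Type*) [NormedAddCommGroup X] [NormedSpace ℝ X] [CompleteSpace X]
    (W : Set X) (hW : IsWeaklyPrecompact W) :
    IsWeaklyPrecompact (closure (convexHull ℝ W)) :=
  isWeaklyPrecompact_closure_convexHull_general X W hW
end
end

section
/- Let X and Z be real Banach spaces, and suppose Z is an ℒ∞ space which is isomorphic to a quotient of a closed linear subspace of X. Then Z* is isomorphic to a closed linear subspace of X*. -/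
/-!
Let `T : X' → Z` be the quotient map and `λ` an `ℒ∞` constant of `Z`. Since `ℓ∞ⁿ` is
`1`-injective (Hahn–Banach in each coordinate), the restriction of `T` to any finite-dimensional
subspace of `X'` extends to an operator `u : X → Z` with `‖u‖ ≤ λ‖T‖`. For `f ∈ Z*` the
functionals `f ∘ u` are uniformly bounded, so they converge pointwise along an ultrafilter
refining the direction of finite subsets of `X'`. The limit `S f ∈ X*` is linear in `f` and
restricts to `f ∘ T` on `X'`, so the open mapping theorem gives `‖f‖ ≤ C ‖f ∘ T‖ ≤ C ‖S f‖`.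
-/

open Filter Topology

noncomputable section

/-- `Z` is an `ℒ∞` space: for some `λ ≥ 1`, every finite-dimensional subspace of `Z` is
contained in a finite-dimensional subspace `F` whose Banach–Mazur distance to `ℓ∞ⁿ`
(`n = dim F`) is at most `λ`. -/
def IsLInftySpace (Z : Type*) [NormedAddCommGroup Z] [NormedSpace ℝ Z] : Prop :=
  ∃ lam : ℝ, 1 ≤ lam ∧
    ∀ E : Submodule ℝ Z, FiniteDimensional ℝ E →
      ∃ F : Submodule ℝ Z, E ≤ F ∧ FiniteDimensional ℝ F ∧
        ∃ (n : ℕ) (S : F ≃L[ℝ] PiLp ⊤ (fun _ : Fin n => ℝ)),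
          ‖(S : F →L[ℝ] PiLp ⊤ (fun _ : Fin n => ℝ))‖ *
            ‖(S.symm : PiLp ⊤ (fun _ : Fin n => ℝ) →L[ℝ] F)‖ ≤ lam

theorem PiLp.exists_extension_linfty {𝕜 E ι : Type*} [RCLike 𝕜] [NormedAddCommGroup E]
    [NormedSpace 𝕜 E] [Fintype ι] (p : Submodule 𝕜 E) (φ : p →L[𝕜] PiLp ⊤ (fun _ : ι => 𝕜)) :
    ∃ ψ : E →L[𝕜] PiLp ⊤ (fun _ : ι => 𝕜), ‖ψ‖ ≤ ‖φ‖ ∧ ∀ x : p, ψ x = φ x := by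
  have hcoord i : ‖(PiLp.proj ⊤ (fun _ : ι => 𝕜) i).comp φ‖ ≤ ‖φ‖ :=
    ContinuousLinearMap.opNorm_le_bound _ (norm_nonneg _) fun x =>
      (PiLp.norm_apply_le _ i).trans (φ.le_opNorm x)
  choose ψ hψ hψnorm using fun i => exists_extension_norm_eq p ((PiLp.proj ⊤ _ i).comp φ)
  refine ⟨(PiLp.continuousLinearEquiv ⊤ 𝕜 (fun _ : ι => 𝕜)).symm.toContinuousLinearMap.comp
    (ContinuousLinearMap.pi ψ), ?_, fun x => PiLp.ext fun i => hψ i x⟩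
  refine ContinuousLinearMap.opNorm_le_bound _ (norm_nonneg _) fun x => ?_
  calc _ = ‖ContinuousLinearMap.pi ψ x‖ := PiLp.norm_toLp _
    _ ≤ ‖φ‖ * ‖x‖ := (ContinuousLinearMap.pi ψ).le_of_opNorm_le
        (ContinuousLinearMap.norm_pi_le_of_le (fun i => (hψnorm i).trans_le (hcoord i))
          (norm_nonneg _)) x

def IsLInftySpaceWith (Z : Type*) [NormedAddCommGroup Z] [NormedSpace ℝ Z] (lam : ℝ) : Prop :=
  ∀ E : Submodule ℝ Z, FiniteDimensional ℝ E →
    ∃ F : Submodule ℝ Z, E ≤ F ∧ FiniteDimensional ℝ F ∧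
      ∃ (n : ℕ) (S : F ≃L[ℝ] PiLp ⊤ (fun _ : Fin n => ℝ)),
        ‖(S : F →L[ℝ] PiLp ⊤ (fun _ : Fin n => ℝ))‖ *
          ‖(S.symm : PiLp ⊤ (fun _ : Fin n => ℝ) →L[ℝ] F)‖ ≤ lam

namespace IsLInftySpaceWith

variable {X Z : Type*} [NormedAddCommGroup X] [NormedSpace ℝ X] [NormedAddCommGroup Z]
  [NormedSpace ℝ Z] {lam : ℝ}

theorem nonneg (hZ : IsLInftySpaceWith Z lam) : 0 ≤ lam := by
  obtain ⟨F, -, -, n, S, hS⟩ := hZ ⊥ inferInstance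
  exact (mul_nonneg (ContinuousLinearMap.opNorm_nonneg _)
    (ContinuousLinearMap.opNorm_nonneg _)).trans hS

theorem exists_extension (hZ : IsLInftySpaceWith Z lam) {W : Submodule ℝ X}
    [FiniteDimensional ℝ W] (v : W →L[ℝ] Z) :
    ∃ u : X →L[ℝ] Z, ‖u‖ ≤ lam * ‖v‖ ∧ ∀ w : W, u w = v w := by
  obtain ⟨F, hF, -, n, S, hS⟩ := hZ (LinearMap.range (v : W →ₗ[ℝ] Z)) inferInstance
  let vF : W →L[ℝ] F := v.codRestrict F fun w => hF ⟨w, rfl⟩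
  have hvF : ‖vF‖ ≤ ‖v‖ := vF.opNorm_le_bound v.opNorm_nonneg fun w => v.le_opNorm w
  obtain ⟨ψ, hψ, hψv⟩ :=
    PiLp.exists_extension_linfty W ((S : F →L[ℝ] PiLp ⊤ (fun _ : Fin n => ℝ)).comp vF)
  refine ⟨F.subtypeL.comp ((S.symm : PiLp ⊤ (fun _ : Fin n => ℝ) →L[ℝ] F).comp ψ), ?_,
    fun w => by simp [hψv w, vF]⟩
  calc _ ≤ ‖F.subtypeL‖ * (‖(S.symm : PiLp ⊤ (fun _ : Fin n => ℝ) →L[ℝ] F)‖ * ‖ψ‖) :=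
        (ContinuousLinearMap.opNorm_comp_le _ _).trans
          (by gcongr; exact ContinuousLinearMap.opNorm_comp_le _ _)
    _ ≤ 1 * (‖(S.symm : PiLp ⊤ (fun _ : Fin n => ℝ) →L[ℝ] F)‖ *
          (‖(S : F →L[ℝ] PiLp ⊤ (fun _ : Fin n => ℝ))‖ * ‖v‖)) := by
        gcongr
        · exact Submodule.norm_subtypeL_le F
        · exact hψ.trans ((ContinuousLinearMap.opNorm_comp_le _ _).trans (by gcongr))
    _ ≤ lam * ‖v‖ := by
        rw [one_mul, ← mul_assoc, mul_comm ‖(S.symm : PiLp ⊤ (fun _ : Fin n => ℝ) →L[ℝ] F)‖]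
        gcongr

theorem exists_extension_of_finset (hZ : IsLInftySpaceWith Z lam) (X' : Submodule ℝ X)
    (T : X' →L[ℝ] Z) (s : Finset X') :
    ∃ u : X →L[ℝ] Z, ‖u‖ ≤ lam * ‖T‖ ∧ ∀ x ∈ s, u x = T x := by
  let W := (Submodule.span ℝ (s : Set X')).map X'.subtype
  have hW : W ≤ X' := Submodule.map_subtype_le _ _
  let incl : W →L[ℝ] X' := LinearMap.mkContinuous (Submodule.inclusion hW) 1 fun w => by simp
  have hincl : ‖incl‖ ≤ 1 := LinearMap.mkContinuous_norm_le _ zero_le_one _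
  obtain ⟨u, hu, huT⟩ := hZ.exists_extension (T.comp incl)
  refine ⟨u, hu.trans ?_, fun x hx => huT ⟨x, Submodule.mem_map_of_mem (Submodule.subset_span hx)⟩⟩
  calc lam * ‖T.comp incl‖ ≤ lam * (‖T‖ * ‖incl‖) :=
        mul_le_mul_of_nonneg_left (T.opNorm_comp_le incl) hZ.nonneg
    _ ≤ lam * ‖T‖ := by
        gcongr
        · exact hZ.nonneg
        · exact mul_le_of_le_one_right (norm_nonneg T) hincl

end IsLInftySpaceWith

theorem Ultrafilter.exists_tendsto_of_norm_le {ι E : Type*} [SeminormedAddCommGroup E]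
    [ProperSpace E] (U : Ultrafilter ι) {g : ι → E} {M : ℝ} (hg : ∀ i, ‖g i‖ ≤ M) :
    ∃ a, ‖a‖ ≤ M ∧ Tendsto g U (𝓝 a) := by
  obtain ⟨a, ha, hU⟩ := (isCompact_closedBall (0 : E) M).ultrafilter_le_nhds (U.map g)
    (le_principal_iff.2 (mem_map.2 (univ_mem' fun i => mem_closedBall_zero_iff.2 (hg i))))
  exact ⟨a, mem_closedBall_zero_iff.1 ha, hU⟩

section

variable {𝕜 : Type*} [NontriviallyNormedField 𝕜]

theorem ContinuousLinearMap.norm_le_mul_norm_comp {E F G : Type*} [NormedAddCommGroup E]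
    [NormedSpace 𝕜 E] [NormedAddCommGroup F] [NormedSpace 𝕜 F] [NormedAddCommGroup G]
    [NormedSpace 𝕜 G] (T : E →L[𝕜] F) {C : ℝ} (hC : 0 ≤ C)
    (hT : ∀ y, ∃ x, T x = y ∧ ‖x‖ ≤ C * ‖y‖) (f : F →L[𝕜] G) : ‖f‖ ≤ C * ‖f.comp T‖ := by
  refine f.opNorm_le_bound (by positivity) fun y => ?_
  obtain ⟨x, rfl, hx⟩ := hT y
  calc ‖f (T x)‖ ≤ ‖f.comp T‖ * ‖x‖ := (f.comp T).le_opNorm x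
    _ ≤ ‖f.comp T‖ * (C * ‖T x‖) := by gcongr
    _ = C * ‖f.comp T‖ * ‖T x‖ := by ring

variable [ProperSpace 𝕜] {X Z : Type*} [NormedAddCommGroup X] [NormedSpace 𝕜 X]
  [NormedAddCommGroup Z] [NormedSpace 𝕜 Z]

theorem exists_dual_tendsto_of_norm_le {ι : Type*} (U : Ultrafilter ι) (u : ι → X →L[𝕜] Z)
    {K : ℝ} (hu : ∀ i, ‖u i‖ ≤ K) :
    ∃ S : StrongDual 𝕜 Z →L[𝕜] StrongDual 𝕜 X,
      ∀ f x, Tendsto (fun i => f (u i x)) U (𝓝 (S f x)) := by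
  have hbound (f : StrongDual 𝕜 Z) (x : X) (i : ι) : ‖f (u i x)‖ ≤ K * ‖f‖ * ‖x‖ := by
    calc ‖f (u i x)‖ ≤ ‖f‖ * ‖u i x‖ := f.le_opNorm _
      _ ≤ ‖f‖ * (K * ‖x‖) := by gcongr; exact (u i).le_of_opNorm_le (hu i) x
      _ = K * ‖f‖ * ‖x‖ := by ring
  choose s hsK hs using fun f x => U.exists_tendsto_of_norm_le (hbound f x)
  have hs_eq {f x a} (h : Tendsto (fun i => f (u i x)) U (𝓝 a)) : s f x = a :=
    tendsto_nhds_unique (hs f x) h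
  let B : StrongDual 𝕜 Z →ₗ[𝕜] X →ₗ[𝕜] 𝕜 := LinearMap.mk₂ 𝕜 s
    (fun f g x => hs_eq ((hs f x).add (hs g x)))
    (fun c f x => hs_eq ((hs f x).const_smul c))
    (fun f x y => hs_eq (by simpa only [map_add] using (hs f x).add (hs f y)))
    (fun c f x => hs_eq (by simpa only [map_smul] using (hs f x).const_smul c))
  exact ⟨B.mkContinuous₂ K hsK, hs⟩

theorem exists_dual_comp_subtype_eq (X' : Submodule 𝕜 X) (T : X' →L[𝕜] Z) {K : ℝ}
    (hT : ∀ s : Finset X', ∃ u : X →L[𝕜] Z, ‖u‖ ≤ K ∧ ∀ x ∈ s, u x = T x) :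
    ∃ S : StrongDual 𝕜 Z →L[𝕜] StrongDual 𝕜 X, ∀ f (x : X'), S f x = f (T x) := by
  choose u hu huT using hT
  obtain ⟨S, hS⟩ := exists_dual_tendsto_of_norm_le (Ultrafilter.of atTop) u hu
  refine ⟨S, fun f x => tendsto_nhds_unique (hS f x) (tendsto_const_nhds.congr' ?_)⟩
  filter_upwards [Ultrafilter.of_le atTop (eventually_ge_atTop {x})] with s hs
  rw [huT s x (hs (Finset.mem_singleton_self x))]

end

/-- If `Z` is an `ℒ∞` space isomorphic to a quotient of a closed subspace
of `X`, then `Z*` is isomorphic to a closed subspace of `X*`. -/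
theorem dual_of_LInfty_quotient_of_subspace_embeds_in_dual
    (X Z : Type*) [NormedAddCommGroup X] [NormedSpace ℝ X] [CompleteSpace X]
    [NormedAddCommGroup Z] [NormedSpace ℝ Z] [CompleteSpace Z]
    (hZ : IsLInftySpace Z)
    (hquot : ∃ X' : Submodule ℝ X, IsClosed (X' : Set X) ∧
      ∃ T : X' →L[ℝ] Z, Function.Surjective T) :
    ∃ S : StrongDual ℝ Z →L[ℝ] StrongDual ℝ X,
      ∃ c : ℝ, 0 < c ∧ ∀ f : StrongDual ℝ Z, c * ‖f‖ ≤ ‖S f‖ := by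
  obtain ⟨lam, -, hZ⟩ := hZ
  obtain ⟨X', hX', T, hT⟩ := hquot
  have : CompleteSpace X' := hX'.completeSpace_coe
  obtain ⟨S, hST⟩ := exists_dual_comp_subtype_eq X' T
    (IsLInftySpaceWith.exists_extension_of_finset hZ X' T)
  obtain ⟨C, hC, hCT⟩ := T.exists_preimage_norm_le hT
  refine ⟨S, C⁻¹, inv_pos.2 hC, fun f => (inv_mul_le_iff₀ hC).2 ?_⟩
  have hrestrict : f.comp T = (S f).comp X'.subtypeL :=
    ContinuousLinearMap.ext fun x => (hST f x).symm
  calc ‖f‖ ≤ C * ‖f.comp T‖ := T.norm_le_mul_norm_comp hC.le hCT f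
    _ ≤ C * (‖S f‖ * ‖X'.subtypeL‖) := by
        rw [hrestrict]; gcongr; exact (S f).opNorm_comp_le _
    _ ≤ C * ‖S f‖ := by
        gcongr; exact mul_le_of_le_one_right (norm_nonneg _) (Submodule.norm_subtypeL_le X')
end
end

section
/- Let κ be an infinite cardinal number and let X be a real Banach space containing a closed linear subspace isomorphic to ℓ¹(κ). Then for every ε > 0, X contains a closed linear subspace that is (1+ε)-isomorphic to ℓ¹(κ). -/
/-!
Call `c` admissible if some operator `T : ℓ¹(κ) → X` of norm at most `1` satisfies
`c ‖y‖ ≤ ‖T y‖`, and let `λ ≤ 1` be the supremum of the admissible constants; it is positive by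
hypothesis. Split `κ` into `κ` blocks of size `κ`. If `c > 0` is admissible and `μ > λ`, then `μ`
is not admissible for `T` restricted to block `j`, so some `x_j` supported in block `j` has
`‖T x_j‖ = 1` and `‖x_j‖ ≥ 1/μ`. As the `x_j` have disjoint supports, `‖∑ y_j x_j‖ ≥ ‖y‖/μ`, so
`e_j ↦ T x_j` has norm `1` and admits the constant `c/μ`. Hence `c ≤ λμ` for every `μ > λ`, so
`λ ≤ λ²` and `λ = 1`. An operator admitting a constant `c > 1/(1+ε)` is a `(1+ε)`-isomorphism
onto its range, which is closed.
-/

open scoped lp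

noncomputable section

namespace EllOne

variable {ι : Type*}

theorem abs_sign_le_one (t : ℝ) : |(SignType.sign t : ℝ)| ≤ 1 := by
  rcases lt_trichotomy t 0 with h | h | h <;> simp [h]

theorem hasSum_abs (y : ℓ¹(ι, ℝ)) : HasSum (fun i => |y i|) ‖y‖ := by
  simpa using lp.hasSum_norm (p := 1) (by norm_num) y

theorem opNorm_le_of_norm_apply_single_le {Y : Type*} [NormedAddCommGroup Y] [NormedSpace ℝ Y]
    [DecidableEq ι] (T : ℓ¹(ι, ℝ) →L[ℝ] Y) {C : ℝ} (hC : 0 ≤ C)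
    (hT : ∀ i, ‖T (lp.single 1 i 1)‖ ≤ C) : ‖T‖ ≤ C := by
  refine T.opNorm_le_bound hC fun y => ?_
  have hTy : HasSum (fun i => y i • T (lp.single 1 i 1)) (T y) := by
    simpa [← map_smul, ← lp.single_smul] using (lp.hasSum_single (by norm_num) y).mapL T
  exact hTy.norm_le_of_bounded ((hasSum_abs y).mul_left C) fun i => by
    rw [norm_smul, Real.norm_eq_abs, mul_comm]; gcongr; exact hT i

section Lift

variable {X : Type*} [NormedAddCommGroup X] [NormedSpace ℝ X] [CompleteSpace X]

def lift (u : ι → X) {C : ℝ} (hC : 0 ≤ C) (hu : ∀ i, ‖u i‖ ≤ C) : ℓ¹(ι, ℝ) →L[ℝ] X :=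
  lp.tsumCLM ℝ ι X ∘L
    lp.mapCLM 1 (fun i => (ContinuousLinearMap.id ℝ ℝ).smulRight (u i)) hC (by simpa using hu)

variable {u : ι → X} {C : ℝ} (hC : 0 ≤ C) (hu : ∀ i, ‖u i‖ ≤ C)

theorem hasSum_lift (y : ℓ¹(ι, ℝ)) : HasSum (fun i => y i • u i) (lift u hC hu y) := by
  have := (lp.memℓp (lp.mapCLM 1 (fun i => (ContinuousLinearMap.id ℝ ℝ).smulRight (u i)) hC
    (by simpa using hu) y)).summable (by norm_num)
  exact (Summable.of_norm (by simpa using this)).hasSum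

theorem norm_lift_le : ‖lift u hC hu‖ ≤ C :=
  (ContinuousLinearMap.opNorm_comp_le _ _).trans <| by
    simpa using
      mul_le_mul lp.norm_tsumCLM_le (lp.norm_mapCLM_le _ _ _ _) (norm_nonneg _) zero_le_one

theorem lift_single [DecidableEq ι] (i : ι) : lift u hC hu (lp.single 1 i 1) = u i := by
  refine (hasSum_lift hC hu _).unique ?_
  convert hasSum_ite_eq i (u i) using 1
  ext j
  by_cases h : j = i <;> simp [lp.single_apply, h]

theorem lift_apply_le_norm {s : ι → ℝ} (hs : ∀ i, ‖s i‖ ≤ 1) (y : ℓ¹(ι, ℝ)) :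
    lift s zero_le_one hs y ≤ ‖y‖ :=
  (le_abs_self _).trans <|
    ((lift s _ hs).le_of_opNorm_le (norm_lift_le _ _) y).trans_eq (one_mul _)

end Lift

section Blocks

variable [DecidableEq ι] (e : ι × ι ≃ ι)

def blockEmbedding (j : ι) : ℓ¹(ι, ℝ) →L[ℝ] ℓ¹(ι, ℝ) :=
  lift (fun α => lp.single 1 (e (j, α)) (1 : ℝ)) zero_le_one fun α => by
    rw [lp.norm_single (by norm_num), norm_one]

theorem norm_blockEmbedding_le (j : ι) : ‖blockEmbedding e j‖ ≤ 1 :=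
  norm_lift_le _ _

theorem lift_blockEmbedding {s : ι → ℝ} (hs : ∀ β, ‖s β‖ ≤ 1) (j : ι) (w : ℓ¹(ι, ℝ)) :
    lift s zero_le_one hs (blockEmbedding e j w) = ∑' α, w α * s (e (j, α)) := by
  refine (((hasSum_lift _ _ w).mapL (lift s zero_le_one hs)).tsum_eq).symm.trans ?_
  simp [lift_single]

theorem norm_le_norm_blockEmbedding (j : ι) (w : ℓ¹(ι, ℝ)) : ‖w‖ ≤ ‖blockEmbedding e j w‖ := by
  set s : ι → ℝ := fun β => SignType.sign (w (e.symm β).2)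
  have hs : ∀ β, ‖s β‖ ≤ 1 := fun β => abs_sign_le_one _
  calc ‖w‖ = lift s zero_le_one hs (blockEmbedding e j w) := by
        simp [lift_blockEmbedding, s, (hasSum_abs w).tsum_eq]
    _ ≤ ‖blockEmbedding e j w‖ := lift_apply_le_norm hs _

theorem mul_norm_le_norm_lift_blockEmbedding {x : ι → ℓ¹(ι, ℝ)} {C a : ℝ} (hC : 0 ≤ C)
    (hx : ∀ j, ‖blockEmbedding e j (x j)‖ ≤ C) (ha : ∀ j, a ≤ ‖x j‖) (y : ℓ¹(ι, ℝ)) :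
    a * ‖y‖ ≤ ‖lift (fun j => blockEmbedding e j (x j)) hC hx y‖ := by
  -- on block `j`, this is the norming functional of `x j` multiplied by `sign (y j)`
  set s : ι → ℝ := fun β => SignType.sign (y (e.symm β).1 * x (e.symm β).1 (e.symm β).2)
  have hs : ∀ β, ‖s β‖ ≤ 1 := fun β => abs_sign_le_one _
  have hsx : ∀ j, lift s zero_le_one hs (blockEmbedding e j (x j)) =
      SignType.sign (y j) * ‖x j‖ := by
    intro j
    rw [lift_blockEmbedding, ← (hasSum_abs (x j)).tsum_eq, ← tsum_mul_left]
    refine tsum_congr fun α => ?_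
    simp only [s, Equiv.symm_apply_apply, sign_mul, SignType.coe_mul]
    rw [mul_left_comm, self_mul_sign]
  have hsum : HasSum (fun j => |y j| * ‖x j‖)
      (lift s zero_le_one hs (lift (fun j => blockEmbedding e j (x j)) hC hx y)) := by
    simpa [hsx, ← mul_assoc] using (hasSum_lift hC hx y).mapL (lift s zero_le_one hs)
  calc a * ‖y‖
      ≤ lift s zero_le_one hs (lift (fun j => blockEmbedding e j (x j)) hC hx y) :=
        hasSum_le (fun j => by rw [mul_comm a]; gcongr; exact ha j)
          ((hasSum_abs y).mul_left a) hsum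
    _ ≤ _ := lift_apply_le_norm hs _

end Blocks

def embeddingConstants (ι X : Type*) [NormedAddCommGroup X] [NormedSpace ℝ X] : Set ℝ :=
  {c | ∃ T : ℓ¹(ι, ℝ) →L[ℝ] X, ‖T‖ ≤ 1 ∧ ∀ y, c * ‖y‖ ≤ ‖T y‖}

section EmbeddingConstants

variable {X : Type*} [NormedAddCommGroup X] [NormedSpace ℝ X] {c μ : ℝ}

theorem le_opNorm_of_forall_mul_norm_le [Nonempty ι] (T : ℓ¹(ι, ℝ) →L[ℝ] X)
    (hT : ∀ y, c * ‖y‖ ≤ ‖T y‖) : c ≤ ‖T‖ := by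
  classical
  obtain ⟨i⟩ := ‹Nonempty ι›
  have h1 : ‖(lp.single 1 i 1 : ℓ¹(ι, ℝ))‖ = 1 := by
    rw [lp.norm_single (by norm_num), norm_one]
  simpa [h1] using (hT (lp.single 1 i 1)).trans (T.le_opNorm _)

theorem le_one_of_mem_embeddingConstants [Nonempty ι] (hc : c ∈ embeddingConstants ι X) :
    c ≤ 1 :=
  let ⟨T, hT, hTc⟩ := hc
  (le_opNorm_of_forall_mul_norm_le T hTc).trans hT

theorem exists_pos_mem_embeddingConstants [Nonempty ι] (T : ℓ¹(ι, ℝ) →L[ℝ] X) (hc : 0 < c)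
    (hT : ∀ y, c * ‖y‖ ≤ ‖T y‖) : ∃ c ∈ embeddingConstants ι X, 0 < c := by
  have hT0 : 0 < ‖T‖ := hc.trans_le (le_opNorm_of_forall_mul_norm_le T hT)
  refine ⟨c / ‖T‖, ⟨‖T‖⁻¹ • T, ?_, fun y => ?_⟩, by positivity⟩
  · rw [norm_smul, norm_inv, norm_norm, inv_mul_cancel₀ hT0.ne']
  · show c / ‖T‖ * ‖y‖ ≤ ‖‖T‖⁻¹ • T y‖
    rw [norm_smul, norm_inv, norm_norm, div_mul_eq_mul_div, div_eq_inv_mul]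
    exact mul_le_mul_of_nonneg_left (hT y) (by positivity)

theorem div_mem_embeddingConstants [Infinite ι] (hc : c ∈ embeddingConstants ι X) (hc0 : 0 < c)
    (hμ : 0 < μ) (hμc : μ ∉ embeddingConstants ι X) : c / μ ∈ embeddingConstants ι X := by
  classical
  obtain ⟨T, hT, hTc⟩ := hc
  obtain ⟨e⟩ : Nonempty (ι × ι ≃ ι) := Cardinal.eq.mp (by simp)
  have hblock : ∀ j, ∃ x : ℓ¹(ι, ℝ), ‖T (blockEmbedding e j x)‖ = 1 ∧ μ⁻¹ ≤ ‖x‖ := by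
    intro j
    have hTB : ‖T ∘L blockEmbedding e j‖ ≤ 1 :=
      (T.opNorm_comp_le _).trans (mul_le_one₀ hT (norm_nonneg _) (norm_blockEmbedding_le e j))
    obtain ⟨w, hw⟩ : ∃ w, ‖T (blockEmbedding e j w)‖ < μ * ‖w‖ := by
      by_contra! h
      exact hμc ⟨_, hTB, h⟩
    have hw0 : 0 < ‖w‖ := pos_of_mul_pos_right ((norm_nonneg _).trans_lt hw) hμ.le
    have hn : 0 < ‖T (blockEmbedding e j w)‖ := calc
      0 < c * ‖w‖ := mul_pos hc0 hw0
      _ ≤ c * ‖blockEmbedding e j w‖ := by gcongr; exact norm_le_norm_blockEmbedding e j w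
      _ ≤ _ := hTc _
    refine ⟨‖T (blockEmbedding e j w)‖⁻¹ • w, ?_, ?_⟩
    · rw [map_smul, map_smul, norm_smul, norm_inv, norm_norm, inv_mul_cancel₀ hn.ne']
    · rw [norm_smul, norm_inv, norm_norm, ← div_eq_inv_mul, inv_le_comm₀ hμ (by positivity),
        inv_div, div_le_iff₀ hw0]
      exact hw.le
  choose x hxT hxμ using hblock
  have hx : ∀ j, ‖blockEmbedding e j (x j)‖ ≤ c⁻¹ := fun j => by
    simpa using (le_inv_mul_iff₀ hc0).2 ((hTc _).trans_eq (hxT j))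
  refine ⟨T ∘L lift (fun j => blockEmbedding e j (x j)) (by positivity) hx, ?_, fun y => ?_⟩
  · refine opNorm_le_of_norm_apply_single_le _ zero_le_one fun j => ?_
    rw [ContinuousLinearMap.comp_apply, lift_single, hxT]
  · calc c / μ * ‖y‖ = c * (μ⁻¹ * ‖y‖) := by ring
      _ ≤ c * ‖lift (fun j => blockEmbedding e j (x j)) (by positivity) hx y‖ := by
        gcongr; exact mul_norm_le_norm_lift_blockEmbedding e _ hx hxμ y
      _ ≤ _ := hTc _

theorem one_le_sSup_embeddingConstants [Infinite ι] (h : ∃ c ∈ embeddingConstants ι X, 0 < c) :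
    1 ≤ sSup (embeddingConstants ι X) := by
  set l := sSup (embeddingConstants ι X)
  obtain ⟨c₀, hc₀, hc₀pos⟩ := h
  have hbdd : BddAbove (embeddingConstants ι X) :=
    ⟨1, fun _ => le_one_of_mem_embeddingConstants⟩
  have hl : 0 < l := hc₀pos.trans_le (le_csSup hbdd hc₀)
  have hsq : ∀ c ∈ embeddingConstants ι X, c ≤ l * l := by
    intro c hc
    rcases le_or_gt c 0 with hc0 | hc0
    · exact hc0.trans (by positivity)
    rw [← div_le_iff₀' hl]
    refine le_of_forall_gt_imp_ge_of_dense fun μ hμ => ?_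
    have hμ0 : 0 < μ := hl.trans hμ
    have hμc : μ ∉ embeddingConstants ι X := fun hμc => (le_csSup hbdd hμc).not_gt hμ
    have := le_csSup hbdd (div_mem_embeddingConstants hc hc0 hμ0 hμc)
    rw [div_le_iff₀ hμ0] at this
    rwa [div_le_iff₀' hl]
  have : l ≤ l * l := csSup_le ⟨c₀, hc₀⟩ hsq
  nlinarith

end EmbeddingConstants

section ClosedRange

variable {𝕜 E F : Type*} [NontriviallyNormedField 𝕜] [NormedAddCommGroup E] [NormedSpace 𝕜 E]
  [CompleteSpace E] [NormedAddCommGroup F] [NormedSpace 𝕜 F]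

theorem exists_isClosed_continuousLinearEquiv_of_mul_norm_le (T : E →L[𝕜] F) {c : ℝ}
    (hc : 0 < c) (hT : ∀ y, c * ‖y‖ ≤ ‖T y‖) :
    ∃ Z : Submodule 𝕜 F, IsClosed (Z : Set F) ∧ ∃ S : E ≃L[𝕜] Z,
      ‖(S : E →L[𝕜] Z)‖ ≤ ‖T‖ ∧ ‖(S.symm : Z →L[𝕜] E)‖ ≤ c⁻¹ := by
  have hanti : AntilipschitzWith ⟨c⁻¹, by positivity⟩ T :=
    T.antilipschitz_of_bound fun y => (le_inv_mul_iff₀ hc).2 (hT y)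
  set e := LinearEquiv.ofInjective T.toLinearMap hanti.injective
  have he : ∀ y, ‖e y‖ ≤ ‖T‖ * ‖y‖ := T.le_opNorm
  have he_symm : ∀ z, ‖e.symm z‖ ≤ c⁻¹ * ‖z‖ := fun z =>
    (le_inv_mul_iff₀ hc).2 <|
      (hT _).trans_eq <| congrArg norm (LinearEquiv.ofInjective_symm_apply _ z)
  refine ⟨(T : E →ₗ[𝕜] F).range, ?_,
    e.toContinuousLinearEquivOfBounds _ _ he he_symm, ?_, ?_⟩
  · rw [LinearMap.coe_range]
    exact hanti.isClosed_range T.uniformContinuous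
  · exact ContinuousLinearMap.opNorm_le_bound _ (norm_nonneg _) he
  · exact ContinuousLinearMap.opNorm_le_bound _ (by positivity) he_symm

end ClosedRange

end EllOne

theorem contains_almost_isometric_ellOne_of_contains_isomorphic_ellOne_general
    (ι : Type*) [Infinite ι]
    (X : Type*) [NormedAddCommGroup X] [NormedSpace ℝ X]
    (hembed : ∃ T : lp (fun _ : ι => ℝ) 1 →L[ℝ] X,
      ∃ c : ℝ, 0 < c ∧ ∀ y, c * ‖y‖ ≤ ‖T y‖)
    (ε : ℝ) (hε : 0 < ε) :
    ∃ Z : Submodule ℝ X, IsClosed (Z : Set X) ∧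
      ∃ T : lp (fun _ : ι => ℝ) 1 ≃L[ℝ] Z,
        ‖(T : lp (fun _ : ι => ℝ) 1 →L[ℝ] Z)‖ *
          ‖(T.symm : Z →L[ℝ] lp (fun _ : ι => ℝ) 1)‖ ≤ 1 + ε := by
  obtain ⟨T₀, c₀, hc₀, hT₀⟩ := hembed
  obtain ⟨c₁, hc₁, hc₁pos⟩ := EllOne.exists_pos_mem_embeddingConstants T₀ hc₀ hT₀
  have hlt : (1 + ε)⁻¹ < sSup (EllOne.embeddingConstants ι X) :=
    (inv_lt_one_of_one_lt₀ (by linarith)).trans_le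
      (EllOne.one_le_sSup_embeddingConstants ⟨c₁, hc₁, hc₁pos⟩)
  obtain ⟨c, ⟨T, hT, hTc⟩, hc⟩ := exists_lt_of_lt_csSup ⟨c₁, hc₁⟩ hlt
  obtain ⟨Z, hZ, S, hS, hS_symm⟩ :=
    EllOne.exists_isClosed_continuousLinearEquiv_of_mul_norm_le T
      (lt_trans (by positivity) hc) hTc
  refine ⟨Z, hZ, S, ?_⟩
  calc _ ≤ 1 * c⁻¹ :=
        mul_le_mul (hS.trans hT) hS_symm (ContinuousLinearMap.opNorm_nonneg _) zero_le_one
    _ ≤ 1 + ε := by rw [one_mul]; exact inv_le_of_inv_le₀ (by positivity) hc.le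

/-- Let `κ` be an infinite cardinal, realized as the cardinality of the
infinite index type `ι`. If a real Banach space `X` contains a subspace isomorphic to
`ℓ¹(κ)`, then for every `ε > 0`, `X` contains a closed subspace `(1+ε)`-isomorphic to
`ℓ¹(κ)`. -/
theorem contains_almost_isometric_ellOne_of_contains_isomorphic_ellOne
    (ι : Type*) [Infinite ι]
    (X : Type*) [NormedAddCommGroup X] [NormedSpace ℝ X] [CompleteSpace X]
    (hembed : ∃ T : lp (fun _ : ι => ℝ) 1 →L[ℝ] X,
      ∃ c : ℝ, 0 < c ∧ ∀ y, c * ‖y‖ ≤ ‖T y‖)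
    (ε : ℝ) (hε : 0 < ε) :
    ∃ Z : Submodule ℝ X, IsClosed (Z : Set X) ∧
      ∃ T : lp (fun _ : ι => ℝ) 1 ≃L[ℝ] Z,
        ‖(T : lp (fun _ : ι => ℝ) 1 →L[ℝ] Z)‖ *
          ‖(T.symm : Z →L[ℝ] lp (fun _ : ι => ℝ) 1)‖ ≤ 1 + ε :=
  contains_almost_isometric_ellOne_of_contains_isomorphic_ellOne_general ι X hembed ε hε
end
end
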